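/- arXiv:2303.05755 — 4 statements merged into one kernel-verified Lean document; each statement's English description precedes it below -/
import Mathlib

section
/- Suppose each f_k is L-smooth and G_{α₀} is strongly convex for some α₀ > 0, and that each f_k is nonnegative. Let {α(t)}_{t≥0} be a non-increasing sequence of positive stepsizes with α(0) ≤ min{(1 + λ_m(W))/L, α₀}. Then the decentralized gradient descent iterates 𝐱(t+1) = 𝐱(t) − ∇G_{α(t)}(𝐱(t)) are uniformly bounded: there exists R > 0 such that ‖𝐱(t)‖ ≤ R for all t ≥ 0. -/
open Finset Set
open scoped RealInnerProductSpace

noncomputable section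

/-- The quadratic penalty `(1/2) 𝐱ᵀ (I − W ⊗ I_n) 𝐱` on the stacked space `ℝ^{nm}`,
where `𝐱 = (x_1, …, x_m)` is indexed by pairs `(k, i)`. -/
def stackedQuad (m n : ℕ) (W : Matrix (Fin m) (Fin m) ℝ)
    (x : EuclideanSpace ℝ (Fin m × Fin n)) : ℝ :=
  (1 / 2) * (‖x‖ ^ 2 - ∑ k : Fin m, ∑ j : Fin m, W k j * ∑ i : Fin n, x (k, i) * x (j, i))

/-- `F(𝐱) = (1/m) ∑ₖ f_k(x_k)` on the stacked space `ℝ^{nm}`. -/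
def stackedF (m n : ℕ) (f : Fin m → EuclideanSpace ℝ (Fin n) → ℝ)
    (x : EuclideanSpace ℝ (Fin m × Fin n)) : ℝ :=
  (1 / (m : ℝ)) * ∑ k : Fin m, f k (WithLp.toLp 2 (fun i => x (k, i)))

/-- `G_α(𝐱) = α F(𝐱) + (1/2) 𝐱ᵀ (I − W ⊗ I_n) 𝐱`. -/
def DGDG (m n : ℕ) (W : Matrix (Fin m) (Fin m) ℝ)
    (f : Fin m → EuclideanSpace ℝ (Fin n) → ℝ) (α : ℝ)
    (x : EuclideanSpace ℝ (Fin m × Fin n)) : ℝ :=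
  α * stackedF m n f x + stackedQuad m n W x

/-- `g` is `μ`-strongly convex: `g − (μ/2)‖·‖²` is convex. -/
def StrongConvexWith {E : Type*} [NormedAddCommGroup E] [InnerProductSpace ℝ E]
    (μ : ℝ) (g : E → ℝ) : Prop :=
  ConvexOn ℝ Set.univ (fun x => g x - μ / 2 * ‖x‖ ^ 2)

/-!
`G_a` satisfies the descent-lemma upper bound with constant `K_a = a L / m + (1 - λ)`, which is
at most `2` once `a L ≤ 1 + λ`, and `G_a` is `(a μ / α₀)`-strongly convex, being the convex
combination `(a / α₀) G_{α₀} + (1 - a / α₀) Q` of `G_{α₀}` and the convex consensus penalty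
`Q`. By Baillon–Haddad cocoercivity, a unit gradient step of a `σ`-strongly convex,
`K`-smooth function with `K + σ ≤ 2` is a `(1 - σ)`-contraction.

For `m ≥ 2` the bound `K_a ≤ 2 - (1 + λ)(1 - 1/m)` leaves room for `σ = a c` with a fixed `c > 0`,
so `‖x(t+1)‖ ≤ (1 - a c) ‖x(t)‖ + a ‖∇F(0)‖` and all large balls around `0` are invariant.
For `m = 1` there is no room, but then `Q = 0` and a critical point of the strongly convex `F`
(a fixed point of a contraction, by Banach) is fixed by every step, which is nonexpansive.
-/

section QuadraticBounds

variable {E : Type*} [NormedAddCommGroup E] [InnerProductSpace ℝ E]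

def QuadUpperBound (g : E → ℝ) (G' : E → E) (K : ℝ) : Prop :=
  ∀ x y, g y ≤ g x + ⟪G' x, y - x⟫ + K / 2 * ‖y - x‖ ^ 2

def QuadLowerBound (g : E → ℝ) (G' : E → E) (σ : ℝ) : Prop :=
  ∀ x y, g x + ⟪G' x, y - x⟫ + σ / 2 * ‖y - x‖ ^ 2 ≤ g y

variable {g : E → ℝ} {G' : E → E} {K σ : ℝ}

lemma QuadUpperBound.mono (h : QuadUpperBound g G' K) {K' : ℝ} (hK : K ≤ K') :
    QuadUpperBound g G' K' := fun x y =>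
  (h x y).trans (by gcongr)

lemma QuadLowerBound.mono (h : QuadLowerBound g G' σ) {σ' : ℝ} (hσ : σ' ≤ σ) :
    QuadLowerBound g G' σ' := fun x y =>
  (h x y).trans' (by gcongr)

lemma QuadUpperBound.add {g₂ : E → ℝ} {G₂ : E → E} {K₂ : ℝ} (h : QuadUpperBound g G' K)
    (h₂ : QuadUpperBound g₂ G₂ K₂) :
    QuadUpperBound (fun x => g x + g₂ x) (fun x => G' x + G₂ x) (K + K₂) := fun x y => by
  have := h x y; have := h₂ x y; rw [inner_add_left]; linarith

lemma QuadLowerBound.add {g₂ : E → ℝ} {G₂ : E → E} {σ₂ : ℝ} (h : QuadLowerBound g G' σ)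
    (h₂ : QuadLowerBound g₂ G₂ σ₂) :
    QuadLowerBound (fun x => g x + g₂ x) (fun x => G' x + G₂ x) (σ + σ₂) := fun x y => by
  have := h x y; have := h₂ x y; rw [inner_add_left]; linarith

lemma QuadUpperBound.const_mul (h : QuadUpperBound g G' K) {a : ℝ} (ha : 0 ≤ a) :
    QuadUpperBound (fun x => a * g x) (fun x => a • G' x) (a * K) := fun x y => by
  have := mul_le_mul_of_nonneg_left (h x y) ha
  rw [real_inner_smul_left]; linarith

lemma QuadLowerBound.const_mul (h : QuadLowerBound g G' σ) {a : ℝ} (ha : 0 ≤ a) :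
    QuadLowerBound (fun x => a * g x) (fun x => a • G' x) (a * σ) := fun x y => by
  have := mul_le_mul_of_nonneg_left (h x y) ha
  rw [real_inner_smul_left]; linarith

lemma norm_sq_eq_add_inner (x y : E) :
    ‖y‖ ^ 2 = ‖x‖ ^ 2 + 2 * ⟪x, y - x⟫ + ‖y - x‖ ^ 2 := by
  rw [← norm_add_sq_real, add_sub_cancel]

lemma QuadUpperBound.sub_sq_norm (h : QuadUpperBound g G' K) (c : ℝ) :
    QuadUpperBound (fun x => g x - c / 2 * ‖x‖ ^ 2) (fun x => G' x - c • x) (K - c) := by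
  intro x y
  have := h x y
  dsimp only
  rw [inner_sub_left, real_inner_smul_left, norm_sq_eq_add_inner x y]
  linarith

lemma QuadLowerBound.sub_sq_norm (h : QuadLowerBound g G' σ) (c : ℝ) :
    QuadLowerBound (fun x => g x - c / 2 * ‖x‖ ^ 2) (fun x => G' x - c • x) (σ - c) := by
  intro x y
  have := h x y
  dsimp only
  rw [inner_sub_left, real_inner_smul_left, norm_sq_eq_add_inner x y]
  linarith

lemma QuadUpperBound.cocoercive (hu : QuadUpperBound g G' K) (hl : QuadLowerBound g G' 0)
    (hK : 0 < K) (x z : E) :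
    ‖G' x - G' z‖ ^ 2 ≤ K * ⟪G' x - G' z, x - z⟫ := by
  -- Baillon–Haddad: compare the upper bound at `w` with the lower bound at `u` in `w - K⁻¹ • δ`
  have key : ∀ u w, g u + ⟪G' u, w - u⟫ + ‖G' w - G' u‖ ^ 2 / (2 * K) ≤ g w := by
    intro u w
    set δ := G' w - G' u
    have h1 := hu w (w - K⁻¹ • δ)
    have h2 := hl u (w - K⁻¹ • δ)
    rw [show w - K⁻¹ • δ - w = -(K⁻¹ • δ) by abel, inner_neg_right, norm_neg, norm_smul,
      real_inner_smul_right, Real.norm_of_nonneg (inv_nonneg.2 hK.le)] at h1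
    rw [show w - K⁻¹ • δ - u = (w - u) - K⁻¹ • δ by abel, inner_sub_right,
      real_inner_smul_right] at h2
    have hδ : ⟪G' w, δ⟫ - ⟪G' u, δ⟫ = ‖δ‖ ^ 2 := by
      rw [← inner_sub_left, real_inner_self_eq_norm_sq]
    have e : ‖δ‖ ^ 2 / (2 * K) = K⁻¹ * (⟪G' w, δ⟫ - ⟪G' u, δ⟫) - K / 2 * (K⁻¹ * ‖δ‖) ^ 2 := by
      rw [hδ]; field_simp; ring
    linarith
  have h := add_le_add (key x z) (key z x)
  rw [norm_sub_rev (G' z)] at h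
  have e : ⟪G' x, z - x⟫ + ⟪G' z, x - z⟫ = -⟪G' x - G' z, x - z⟫ := by
    rw [← neg_sub x z, inner_neg_right, inner_sub_left]; ring
  have e' : ‖G' x - G' z‖ ^ 2 / (2 * K) + ‖G' x - G' z‖ ^ 2 / (2 * K) =
      ‖G' x - G' z‖ ^ 2 / K := by ring
  rw [← div_le_iff₀' hK]
  linarith

lemma QuadUpperBound.norm_sub_smul_sub_le (hu : QuadUpperBound g G' K)
    (hl : QuadLowerBound g G' σ) (hσK : σ < K) {s : ℝ} (hs : 0 ≤ s) (hsK : s * (K + σ) ≤ 2)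
    (x z : E) :
    ‖(x - s • G' x) - (z - s • G' z)‖ ≤ (1 - s * σ) * ‖x - z‖ := by
  set D := (G' x - σ • x) - (G' z - σ • z)
  have hD : ‖D‖ ^ 2 ≤ (K - σ) * ⟪D, x - z⟫ := by
    have hl0 := hl.sub_sq_norm σ
    rw [sub_self] at hl0
    exact (hu.sub_sq_norm σ).cocoercive hl0 (sub_pos.2 hσK) x z
  have hDd : 0 ≤ ⟪D, x - z⟫ :=
    nonneg_of_mul_nonneg_right (hD.trans' (sq_nonneg _)) (sub_pos.2 hσK)
  have hstep : (x - s • G' x) - (z - s • G' z) = (1 - s * σ) • (x - z) - s • D := by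
    simp only [D, smul_sub, sub_smul, one_smul, smul_smul]
    abel
  have hsσ : 0 ≤ 1 - s * σ := by nlinarith
  rw [hstep, ← pow_le_pow_iff_left₀ (norm_nonneg _) (by positivity) two_ne_zero]
  calc ‖(1 - s * σ) • (x - z) - s • D‖ ^ 2
      = ((1 - s * σ) * ‖x - z‖) ^ 2 - s * (2 * (1 - s * σ) * ⟪D, x - z⟫ - s * ‖D‖ ^ 2) := by
        rw [norm_sub_sq_real, norm_smul, norm_smul, Real.norm_of_nonneg hsσ,
          Real.norm_of_nonneg hs, real_inner_smul_left, real_inner_smul_right, real_inner_comm]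
        ring
    _ ≤ ((1 - s * σ) * ‖x - z‖) ^ 2 := by
        -- `s * (K - σ) ≤ 2 * (1 - s * σ)` is the step-size condition
        nlinarith [mul_le_mul_of_nonneg_left hD hs, mul_nonneg hs hDd]

lemma QuadUpperBound.exists_eq_zero [CompleteSpace E] (hu : QuadUpperBound g G' K)
    (hl : QuadLowerBound g G' σ) (hσ : 0 < σ) : ∃ z, G' z = 0 := by
  -- Banach: for `s = 1 / (K' + σ)` the step `x ↦ x - s • G' x` is a contraction
  set K' := max K σ + σ
  have hσK' : σ < K' := by simp only [K']; linarith [le_max_right K σ]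
  set s := (K' + σ)⁻¹
  have hs : 0 < s := inv_pos.2 (by linarith)
  have hsσ : s * σ ≤ 1 := by
    rw [inv_mul_le_one₀ (by linarith)]; linarith
  have hT : ContractingWith (1 - s * σ).toNNReal (fun x => x - s • G' x) := by
    refine ⟨Real.toNNReal_lt_one.2 (by nlinarith), LipschitzWith.of_dist_le_mul fun x z => ?_⟩
    rw [dist_eq_norm, dist_eq_norm, Real.coe_toNNReal _ (by linarith)]
    exact (hu.mono (le_max_left K σ |>.trans (by linarith))).norm_sub_smul_sub_le hl hσK' hs.le
      (by rw [inv_mul_cancel₀ (by linarith)]; norm_num) x z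
  refine ⟨ContractingWith.fixedPoint _ hT, ?_⟩
  have hfix := ContractingWith.fixedPoint_isFixedPt (f := fun x => x - s • G' x) hT
  rw [Function.IsFixedPt, sub_eq_self, smul_eq_zero] at hfix
  exact hfix.resolve_left hs.ne'

lemma QuadUpperBound.hasGradientAt [CompleteSpace E] (hu : QuadUpperBound g G' K)
    (hl : QuadLowerBound g G' σ) (x : E) : HasGradientAt g (G' x) x := by
  rw [hasGradientAt_iff_hasFDerivAt, hasFDerivAt_iff_isLittleO_nhds_zero]
  refine (Asymptotics.IsBigO.of_bound ((|K| + |σ|) / 2) (Filter.Eventually.of_forall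
    fun h => ?_)).trans_isLittleO (Asymptotics.isLittleO_norm_pow_id one_lt_two)
  have h1 := hu x (x + h)
  have h2 := hl x (x + h)
  rw [add_sub_cancel_left] at h1 h2
  rw [InnerProductSpace.toDual_apply_apply, Real.norm_eq_abs, norm_pow, norm_norm, abs_le]
  have hK := mul_le_mul_of_nonneg_right (le_abs_self K) (sq_nonneg ‖h‖)
  have hσ := mul_le_mul_of_nonneg_right (neg_abs_le σ) (sq_nonneg ‖h‖)
  have hK0 := mul_nonneg (abs_nonneg K) (sq_nonneg ‖h‖)
  have hσ0 := mul_nonneg (abs_nonneg σ) (sq_nonneg ‖h‖)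
  constructor <;> linarith

lemma StrongConvexWith.quadLowerBound [CompleteSpace E] (hc : StrongConvexWith σ g)
    (hg : ∀ x, HasGradientAt g (G' x) x) : QuadLowerBound g G' σ := by
  intro x y
  set ℓ := AffineMap.lineMap (k := ℝ) x y
  have hℓ : HasDerivAt ℓ (y - x) 0 := AffineMap.hasDerivAt_lineMap
  have hℓ0 : ℓ 0 = x := AffineMap.lineMap_apply_zero x y
  have hgℓ := (hg (ℓ 0)).hasFDerivAt.comp_hasDerivAt (0 : ℝ) hℓ
  have hslope := (hc.comp_affineMap ℓ).le_slope_of_hasDerivAt (mem_univ 0) (mem_univ 1) one_pos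
    (hgℓ.sub (hℓ.norm_sq.const_mul (σ / 2)))
  have hℓ1 : ℓ 1 = y := AffineMap.lineMap_apply_one x y
  simp only [Function.comp_def, slope_def_field, hℓ0, hℓ1, sub_zero, div_one,
    InnerProductSpace.toDual_apply_apply, norm_sq_eq_add_inner x y] at hslope
  linarith

lemma abs_sub_sub_inner_le_of_lipschitz [CompleteSpace E] (hg : ∀ x, HasGradientAt g (G' x) x)
    (hG : ∀ x y, ‖G' x - G' y‖ ≤ K * ‖x - y‖) (x y : E) :
    |g y - g x - ⟪G' x, y - x⟫| ≤ K / 2 * ‖y - x‖ ^ 2 := by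
  set v := y - x
  set φ : ℝ → ℝ := fun s => g (x + s • v) - g x - s * ⟪G' x, v⟫
  have hφ : ∀ s, HasDerivAt φ ⟪G' (x + s • v) - G' x, v⟫ s := by
    intro s
    have hline : HasDerivAt (fun s : ℝ => x + s • v) v s := by
      simpa using ((hasDerivAt_id s).smul_const v).const_add x
    have h := ((hg (x + s • v)).hasFDerivAt.comp_hasDerivAt s hline).sub_const (g x)
    exact (h.sub ((hasDerivAt_id s).mul_const ⟪G' x, v⟫)).congr_deriv (by simp [inner_sub_left])
  have hbound : ∀ s ∈ Ico (0 : ℝ) 1, ‖⟪G' (x + s • v) - G' x, v⟫‖ ≤ K * ‖v‖ ^ 2 * s := by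
    rintro s ⟨hs, -⟩
    calc ‖⟪G' (x + s • v) - G' x, v⟫‖ ≤ ‖G' (x + s • v) - G' x‖ * ‖v‖ := norm_inner_le_norm _ _
      _ ≤ K * ‖x + s • v - x‖ * ‖v‖ := by gcongr; exact hG _ _
      _ = K * ‖v‖ ^ 2 * s := by
        rw [add_sub_cancel_left, norm_smul, Real.norm_of_nonneg hs]; ring
  have := image_norm_le_of_norm_deriv_right_le_deriv_boundary (a := 0) (b := 1)
    (B := fun s => K / 2 * ‖v‖ ^ 2 * s ^ 2) (B' := fun s => K * ‖v‖ ^ 2 * s)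
    (fun s _ => (hφ s).continuousAt.continuousWithinAt)
    (fun s _ => (hφ s).hasDerivWithinAt) (by simp [φ])
    (fun s => ((hasDerivAt_pow 2 s).const_mul (K / 2 * ‖v‖ ^ 2)).congr_deriv (by simp; ring))
    hbound (right_mem_Icc.2 zero_le_one)
  simpa [φ, v] using this

end QuadraticBounds

open scoped Kronecker

section Stacked

variable {m n : ℕ}

def mixing (n : ℕ) (W : Matrix (Fin m) (Fin m) ℝ) :
    EuclideanSpace ℝ (Fin m × Fin n) →L[ℝ] EuclideanSpace ℝ (Fin m × Fin n) :=
  Matrix.toEuclideanCLM (n := Fin m × Fin n) (𝕜 := ℝ) (W ⊗ₖ 1)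

lemma inner_mixing_self (W : Matrix (Fin m) (Fin m) ℝ) (u : EuclideanSpace ℝ (Fin m × Fin n)) :
    ⟪u, mixing n W u⟫ = ∑ k, ∑ j, W k j * ∑ i, u (k, i) * u (j, i) := by
  rw [mixing, Matrix.inner_toEuclideanCLM]
  simp only [dotProduct, Matrix.mulVec, Fintype.sum_prod_type, Matrix.kroneckerMap_apply,
    Matrix.one_apply, ite_mul, mul_ite, zero_mul, mul_zero, mul_one, Finset.sum_ite_eq,
    Finset.mem_univ, if_true, Finset.mul_sum]
  refine Finset.sum_congr rfl fun k _ => Finset.sum_comm.trans ?_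
  refine Finset.sum_congr rfl fun j _ => Finset.sum_congr rfl fun i _ => ?_
  ring

lemma inner_mixing_comm {W : Matrix (Fin m) (Fin m) ℝ} (hW : W.IsSymm)
    (u v : EuclideanSpace ℝ (Fin m × Fin n)) :
    ⟪mixing n W u, v⟫ = ⟪u, mixing n W v⟫ := by
  have hM : (W ⊗ₖ (1 : Matrix (Fin n) (Fin n) ℝ)).IsHermitian := by
    rw [Matrix.IsHermitian, Matrix.conjTranspose_eq_transpose_of_trivial,
      ← Matrix.kroneckerMap_transpose, Matrix.transpose_one, hW.eq]
  exact Matrix.isSymmetric_toEuclideanLin_iff.2 hM u v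

lemma mixing_of_eq_one {W : Matrix (Fin m) (Fin m) ℝ} (hW : W = 1)
    (u : EuclideanSpace ℝ (Fin m × Fin n)) : mixing n W u = u := by
  rw [mixing, hW, Matrix.one_kronecker_one, map_one, one_apply_eq_self]

lemma norm_sq_eq_sum_sum (u : EuclideanSpace ℝ (Fin m × Fin n)) :
    ‖u‖ ^ 2 = ∑ k, ∑ i, u (k, i) ^ 2 := by
  rw [EuclideanSpace.norm_sq_eq, Fintype.sum_prod_type]
  simp

lemma inner_mixing_self_le_norm_sq {W : Matrix (Fin m) (Fin m) ℝ} (hWsymm : W.IsSymm)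
    (hWnonneg : ∀ i j, 0 ≤ W i j) (hWrow : ∀ i, ∑ j, W i j = 1)
    (u : EuclideanSpace ℝ (Fin m × Fin n)) :
    ⟪u, mixing n W u⟫ ≤ ‖u‖ ^ 2 := by
  rw [inner_mixing_self]
  set S : Fin m → ℝ := fun k => ∑ i, u (k, i) ^ 2
  have hcol : ∀ j, ∑ k, W k j = 1 := fun j => by simpa only [hWsymm.apply] using hWrow j
  calc ∑ k, ∑ j, W k j * ∑ i, u (k, i) * u (j, i)
      ≤ ∑ k, ∑ j, W k j * ((S k + S j) / 2) := by
        gcongr with k _ j _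
        · exact hWnonneg k j
        · simp only [S, ← Finset.sum_add_distrib, Finset.sum_div]
          gcongr with i
          nlinarith [sq_nonneg (u (k, i) - u (j, i))]
    _ = ‖u‖ ^ 2 := by
        simp only [mul_add, add_div, mul_div_assoc', Finset.sum_add_distrib]
        rw [Finset.sum_comm (f := fun k j => W k j * S j / 2)]
        simp only [mul_div_assoc, ← Finset.sum_mul, hWrow, hcol, one_mul, norm_sq_eq_sum_sum, S]
        rw [← Finset.sum_div]
        ring

lemma stackedQuad_eq (W : Matrix (Fin m) (Fin m) ℝ) (x : EuclideanSpace ℝ (Fin m × Fin n)) :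
    stackedQuad m n W x = (‖x‖ ^ 2 - ⟪x, mixing n W x⟫) / 2 := by
  rw [stackedQuad, inner_mixing_self]; ring

lemma stackedQuad_add {W : Matrix (Fin m) (Fin m) ℝ} (hW : W.IsSymm)
    (x h : EuclideanSpace ℝ (Fin m × Fin n)) :
    stackedQuad m n W (x + h) =
      stackedQuad m n W x + ⟪x - mixing n W x, h⟫ + stackedQuad m n W h := by
  have e₁ : ⟪x, mixing n W h⟫ = ⟪mixing n W x, h⟫ := (inner_mixing_comm hW x h).symm
  have e₂ : ⟪h, mixing n W x⟫ = ⟪mixing n W x, h⟫ := real_inner_comm _ _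
  simp only [stackedQuad_eq, map_add, inner_add_left, inner_add_right, norm_add_sq_real,
    inner_sub_left, e₁, e₂]
  ring

lemma stackedQuad_quadUpperBound {W : Matrix (Fin m) (Fin m) ℝ} (hW : W.IsSymm) {lam : ℝ}
    (hlam : ∀ u : EuclideanSpace ℝ (Fin m × Fin n),
      lam * ‖u‖ ^ 2 ≤ ∑ k : Fin m, ∑ j : Fin m, W k j * ∑ i : Fin n, u (k, i) * u (j, i)) :
    QuadUpperBound (stackedQuad m n W) (fun x => x - mixing n W x) (1 - lam) := by
  intro x y
  have h := hlam (y - x)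
  have e := stackedQuad_add hW x (y - x)
  rw [add_sub_cancel, stackedQuad_eq W (y - x), inner_mixing_self] at e
  dsimp only
  linarith

lemma stackedQuad_quadLowerBound {W : Matrix (Fin m) (Fin m) ℝ} (hWsymm : W.IsSymm)
    (hWnonneg : ∀ i j, 0 ≤ W i j) (hWrow : ∀ i, ∑ j, W i j = 1) :
    QuadLowerBound (stackedQuad m n W) (fun x => x - mixing n W x) 0 := by
  intro x y
  have h := inner_mixing_self_le_norm_sq hWsymm hWnonneg hWrow (y - x)
  have e := stackedQuad_add hWsymm x (y - x)
  rw [add_sub_cancel, stackedQuad_eq W (y - x)] at e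
  dsimp only
  linarith

def block (x : EuclideanSpace ℝ (Fin m × Fin n)) (k : Fin m) : EuclideanSpace ℝ (Fin n) :=
  WithLp.toLp 2 fun i => x (k, i)

lemma inner_eq_sum_inner_block (u v : EuclideanSpace ℝ (Fin m × Fin n)) :
    ⟪u, v⟫ = ∑ k, ⟪block u k, block v k⟫ := by
  simp [PiLp.inner_apply, Fintype.sum_prod_type, block]

lemma norm_sq_eq_sum_block (u : EuclideanSpace ℝ (Fin m × Fin n)) :
    ‖u‖ ^ 2 = ∑ k, ‖block u k‖ ^ 2 := by
  simp only [← real_inner_self_eq_norm_sq, inner_eq_sum_inner_block]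

def gradF (m n : ℕ) (f : Fin m → EuclideanSpace ℝ (Fin n) → ℝ)
    (x : EuclideanSpace ℝ (Fin m × Fin n)) : EuclideanSpace ℝ (Fin m × Fin n) :=
  WithLp.toLp 2 fun p => (m : ℝ)⁻¹ * gradient (f p.1) (block x p.1) p.2

lemma block_sub (u v : EuclideanSpace ℝ (Fin m × Fin n)) (k : Fin m) :
    block (u - v) k = block u k - block v k := rfl

lemma stackedF_eq (f : Fin m → EuclideanSpace ℝ (Fin n) → ℝ)
    (x : EuclideanSpace ℝ (Fin m × Fin n)) :
    stackedF m n f x = (m : ℝ)⁻¹ * ∑ k, f k (block x k) := by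
  rw [stackedF, one_div]; rfl

lemma block_gradF (f : Fin m → EuclideanSpace ℝ (Fin n) → ℝ)
    (x : EuclideanSpace ℝ (Fin m × Fin n)) (k : Fin m) :
    block (gradF m n f x) k = (m : ℝ)⁻¹ • gradient (f k) (block x k) := rfl

lemma stackedF_quadBounds {f : Fin m → EuclideanSpace ℝ (Fin n) → ℝ}
    (hdiff : ∀ k, Differentiable ℝ (f k)) {L : ℝ}
    (hsmooth : ∀ k, ∀ x y, ‖gradient (f k) x - gradient (f k) y‖ ≤ L * ‖x - y‖) :
    QuadUpperBound (stackedF m n f) (gradF m n f) (L / m) ∧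
      QuadLowerBound (stackedF m n f) (gradF m n f) (-(L / m)) := by
  suffices h : ∀ x y, |stackedF m n f y - stackedF m n f x - ⟪gradF m n f x, y - x⟫| ≤
      L / m / 2 * ‖y - x‖ ^ 2 by
    refine ⟨fun x y => ?_, fun x y => ?_⟩ <;> linarith [abs_le.1 (h x y)]
  intro x y
  have hblock := fun k => abs_sub_sub_inner_le_of_lipschitz (fun z => (hdiff k z).hasGradientAt)
    (hsmooth k) (block x k) (block y k)
  have e : stackedF m n f y - stackedF m n f x - ⟪gradF m n f x, y - x⟫ =
      (m : ℝ)⁻¹ * ∑ k, (f k (block y k) - f k (block x k) -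
        ⟪gradient (f k) (block x k), block y k - block x k⟫) := by
    simp only [stackedF_eq, inner_eq_sum_inner_block, block_gradF, block_sub,
      real_inner_smul_left, Finset.sum_sub_distrib, ← Finset.mul_sum]
    ring
  rw [e, abs_mul, abs_inv, Nat.abs_cast, norm_sq_eq_sum_block, Finset.mul_sum]
  refine (mul_le_mul_of_nonneg_left ((Finset.abs_sum_le_sum_abs _ _).trans
    (Finset.sum_le_sum fun k _ => hblock k)) (by positivity)).trans_eq ?_
  rw [Finset.mul_sum]
  exact Finset.sum_congr rfl fun k _ => by rw [block_sub]; ring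

end Stacked

section DGD

variable {m n : ℕ} {W : Matrix (Fin m) (Fin m) ℝ} {f : Fin m → EuclideanSpace ℝ (Fin n) → ℝ}
  {L lam α₀ μ a : ℝ}

def gradG (m n : ℕ) (W : Matrix (Fin m) (Fin m) ℝ) (f : Fin m → EuclideanSpace ℝ (Fin n) → ℝ)
    (a : ℝ) (x : EuclideanSpace ℝ (Fin m × Fin n)) : EuclideanSpace ℝ (Fin m × Fin n) :=
  a • gradF m n f x + (x - mixing n W x)

def dgdStep (m n : ℕ) (W : Matrix (Fin m) (Fin m) ℝ) (f : Fin m → EuclideanSpace ℝ (Fin n) → ℝ)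
    (a : ℝ) (x : EuclideanSpace ℝ (Fin m × Fin n)) : EuclideanSpace ℝ (Fin m × Fin n) :=
  x - gradG m n W f a x

lemma DGDG_quadUpperBound (hW : W.IsSymm) (hdiff : ∀ k, Differentiable ℝ (f k))
    (hsmooth : ∀ k, ∀ x y, ‖gradient (f k) x - gradient (f k) y‖ ≤ L * ‖x - y‖)
    (hlam : ∀ u : EuclideanSpace ℝ (Fin m × Fin n),
      lam * ‖u‖ ^ 2 ≤ ∑ k : Fin m, ∑ j : Fin m, W k j * ∑ i : Fin n, u (k, i) * u (j, i))
    (ha : 0 ≤ a) :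
    QuadUpperBound (DGDG m n W f a) (gradG m n W f a) (a * (L / m) + (1 - lam)) :=
  ((stackedF_quadBounds hdiff hsmooth).1.const_mul ha).add (stackedQuad_quadUpperBound hW hlam)

lemma hasGradientAt_DGDG (hWsymm : W.IsSymm) (hWnonneg : ∀ i j, 0 ≤ W i j)
    (hWrow : ∀ i, ∑ j, W i j = 1) (hdiff : ∀ k, Differentiable ℝ (f k))
    (hsmooth : ∀ k, ∀ x y, ‖gradient (f k) x - gradient (f k) y‖ ≤ L * ‖x - y‖)
    (hlam : ∀ u : EuclideanSpace ℝ (Fin m × Fin n),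
      lam * ‖u‖ ^ 2 ≤ ∑ k : Fin m, ∑ j : Fin m, W k j * ∑ i : Fin n, u (k, i) * u (j, i))
    (ha : 0 ≤ a) (x : EuclideanSpace ℝ (Fin m × Fin n)) :
    HasGradientAt (DGDG m n W f a) (gradG m n W f a x) x :=
  (DGDG_quadUpperBound hWsymm hdiff hsmooth hlam ha).hasGradientAt
    (((stackedF_quadBounds hdiff hsmooth).2.const_mul ha).add
      (stackedQuad_quadLowerBound hWsymm hWnonneg hWrow)) x

/-- `G_a` is the convex combination `(a / α₀) G_{α₀} + (1 - a / α₀) Q` with `Q` convex. -/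
lemma DGDG_quadLowerBound (hWsymm : W.IsSymm) (hWnonneg : ∀ i j, 0 ≤ W i j)
    (hWrow : ∀ i, ∑ j, W i j = 1) (hdiff : ∀ k, Differentiable ℝ (f k))
    (hsmooth : ∀ k, ∀ x y, ‖gradient (f k) x - gradient (f k) y‖ ≤ L * ‖x - y‖)
    (hlam : ∀ u : EuclideanSpace ℝ (Fin m × Fin n),
      lam * ‖u‖ ^ 2 ≤ ∑ k : Fin m, ∑ j : Fin m, W k j * ∑ i : Fin n, u (k, i) * u (j, i))
    (hα₀ : 0 < α₀) (hsc : StrongConvexWith μ (DGDG m n W f α₀)) (ha : 0 ≤ a) (haα₀ : a ≤ α₀) :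
    QuadLowerBound (DGDG m n W f a) (gradG m n W f a) (a / α₀ * μ) := by
  have hμ := hsc.quadLowerBound
    (hasGradientAt_DGDG hWsymm hWnonneg hWrow hdiff hsmooth hlam hα₀.le)
  have h := (hμ.const_mul (div_nonneg ha hα₀.le)).add
    ((stackedQuad_quadLowerBound hWsymm hWnonneg hWrow).const_mul
      (sub_nonneg.2 ((div_le_one hα₀).2 haα₀)))
  have eG : DGDG m n W f a = fun x =>
      a / α₀ * DGDG m n W f α₀ x + (1 - a / α₀) * stackedQuad m n W x := by
    funext x; simp only [DGDG]; field_simp; ring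
  have eG' : gradG m n W f a = fun x =>
      (a / α₀) • gradG m n W f α₀ x + (1 - a / α₀) • (x - mixing n W x) := by
    funext x
    simp only [gradG, smul_add, smul_smul, div_mul_cancel₀ a hα₀.ne']
    module
  rw [eG, eG']
  simpa using h

lemma norm_dgdStep_sub_le (hWsymm : W.IsSymm) (hWnonneg : ∀ i j, 0 ≤ W i j)
    (hWrow : ∀ i, ∑ j, W i j = 1) (hdiff : ∀ k, Differentiable ℝ (f k))
    (hsmooth : ∀ k, ∀ x y, ‖gradient (f k) x - gradient (f k) y‖ ≤ L * ‖x - y‖)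
    (hlam : ∀ u : EuclideanSpace ℝ (Fin m × Fin n),
      lam * ‖u‖ ^ 2 ≤ ∑ k : Fin m, ∑ j : Fin m, W k j * ∑ i : Fin n, u (k, i) * u (j, i))
    (hα₀ : 0 < α₀) (hsc : StrongConvexWith μ (DGDG m n W f α₀)) (ha : 0 ≤ a) (haα₀ : a ≤ α₀)
    {σ : ℝ} (hσμ : σ ≤ a / α₀ * μ) (hσK : σ < a * (L / m) + (1 - lam))
    (hK : a * (L / m) + (1 - lam) + σ ≤ 2) (x z : EuclideanSpace ℝ (Fin m × Fin n)) :
    ‖dgdStep m n W f a x - dgdStep m n W f a z‖ ≤ (1 - σ) * ‖x - z‖ := by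
  simpa [dgdStep] using (DGDG_quadUpperBound hWsymm hdiff hsmooth hlam ha).norm_sub_smul_sub_le
    ((DGDG_quadLowerBound hWsymm hWnonneg hWrow hdiff hsmooth hlam hα₀ hsc ha haα₀).mono hσμ)
    hσK zero_le_one (by linarith) x z

lemma le_one_of_forall_le_sum_mixing (hm : 1 ≤ m) (hn : 1 ≤ n) (hWsymm : W.IsSymm)
    (hWnonneg : ∀ i j, 0 ≤ W i j) (hWrow : ∀ i, ∑ j, W i j = 1)
    (hlam : ∀ u : EuclideanSpace ℝ (Fin m × Fin n),
      lam * ‖u‖ ^ 2 ≤ ∑ k : Fin m, ∑ j : Fin m, W k j * ∑ i : Fin n, u (k, i) * u (j, i)) :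
    lam ≤ 1 := by
  set u : EuclideanSpace ℝ (Fin m × Fin n) := EuclideanSpace.single (⟨0, hm⟩, ⟨0, hn⟩) 1
  have hu : ‖u‖ = 1 := by simp [u]
  have h := (hlam u).trans_eq (inner_mixing_self W u).symm
  simpa [hu] using h.trans (inner_mixing_self_le_norm_sq hWsymm hWnonneg hWrow u)

/-- For a single agent `G_a = a F`, so a critical point of `F` is fixed by every step. -/
lemma exists_forall_dgdStep_eq_self (hm : m = 1) (hWsymm : W.IsSymm)
    (hWnonneg : ∀ i j, 0 ≤ W i j) (hWrow : ∀ i, ∑ j, W i j = 1)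
    (hdiff : ∀ k, Differentiable ℝ (f k))
    (hsmooth : ∀ k, ∀ x y, ‖gradient (f k) x - gradient (f k) y‖ ≤ L * ‖x - y‖)
    (hlam : ∀ u : EuclideanSpace ℝ (Fin m × Fin n),
      lam * ‖u‖ ^ 2 ≤ ∑ k : Fin m, ∑ j : Fin m, W k j * ∑ i : Fin n, u (k, i) * u (j, i))
    (hα₀ : 0 < α₀) (hμ : 0 < μ) (hsc : StrongConvexWith μ (DGDG m n W f α₀)) :
    ∃ z, ∀ a, dgdStep m n W f a z = z := by
  subst hm
  have hW : W = 1 := by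
    ext i j
    rw [Subsingleton.elim i 0, Subsingleton.elim j 0, Matrix.one_apply_eq]
    simpa using hWrow 0
  obtain ⟨z, hz⟩ := (DGDG_quadUpperBound hWsymm hdiff hsmooth hlam hα₀.le).exists_eq_zero
    (hsc.quadLowerBound (hasGradientAt_DGDG hWsymm hWnonneg hWrow hdiff hsmooth hlam hα₀.le)) hμ
  have hF : gradF 1 n f z = 0 := by
    simpa [gradG, mixing_of_eq_one hW, hα₀.ne'] using hz
  exact ⟨z, fun a => by simp [dgdStep, gradG, hF, mixing_of_eq_one hW]⟩

lemma exists_mapsTo_closedBall_dgdStep_of_two_le (hm : 2 ≤ m) (hWsymm : W.IsSymm)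
    (hWnonneg : ∀ i j, 0 ≤ W i j) (hWrow : ∀ i, ∑ j, W i j = 1)
    (hdiff : ∀ k, Differentiable ℝ (f k)) (hL : 0 < L)
    (hsmooth : ∀ k, ∀ x y, ‖gradient (f k) x - gradient (f k) y‖ ≤ L * ‖x - y‖)
    (hlam : ∀ u : EuclideanSpace ℝ (Fin m × Fin n),
      lam * ‖u‖ ^ 2 ≤ ∑ k : Fin m, ∑ j : Fin m, W k j * ∑ i : Fin n, u (k, i) * u (j, i))
    (hlam1 : lam ≤ 1) (hα₀ : 0 < α₀) (hμ : 0 < μ) (hsc : StrongConvexWith μ (DGDG m n W f α₀))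
    (r : ℝ) :
    ∃ R ≥ r, ∀ a, 0 < a → a ≤ α₀ → a * L ≤ 1 + lam →
      MapsTo (dgdStep m n W f a) (Metric.closedBall 0 R) (Metric.closedBall 0 R) := by
  -- `c ≤ L / (2m)` gives `a c < K_a` and, as `m ≥ 2`, `K_a + a c ≤ 2`
  set c := min (μ / α₀) (L / (2 * m))
  have hm0 : (0 : ℝ) < m := by positivity
  have hc : 0 < c := lt_min (by positivity) (by positivity)
  set g := ‖gradF m n f 0‖
  refine ⟨max r (g / c), le_max_left _ _, fun a ha haα₀ haL y hy => ?_⟩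
  have hcL : a * c ≤ a * (L / m) / 2 := by
    rw [mul_div_assoc]
    exact mul_le_mul_of_nonneg_left ((min_le_right _ _).trans_eq (by ring)) ha.le
  have hlam0 : 0 ≤ 1 + lam := (mul_pos ha hL).le.trans haL
  have haLm : a * (L / m) ≤ (1 + lam) / 2 := by
    calc a * (L / m) = a * L / m := by ring
      _ ≤ (1 + lam) / m := by gcongr
      _ ≤ (1 + lam) / 2 := by gcongr; exact_mod_cast hm
  have hstep := norm_dgdStep_sub_le hWsymm hWnonneg hWrow hdiff hsmooth hlam hα₀ hsc ha.le haα₀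
    (σ := a * c) (by rw [div_mul_eq_mul_div, mul_div_assoc]; gcongr; exact min_le_left _ _)
    (by linarith [mul_pos ha (div_pos hL hm0)]) (by linarith) y 0
  rw [sub_zero] at hstep
  have h0 : ‖dgdStep m n W f a 0‖ = a * g := by
    simp [dgdStep, gradG, norm_smul, abs_of_pos ha, g]
  rw [Metric.mem_closedBall, dist_zero_right] at hy ⊢
  have hgR : g ≤ c * max r (g / c) := by
    rw [← div_le_iff₀' hc]; exact le_max_right _ _
  calc ‖dgdStep m n W f a y‖
      ≤ ‖dgdStep m n W f a y - dgdStep m n W f a 0‖ + ‖dgdStep m n W f a 0‖ :=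
        norm_le_norm_sub_add _ _
    _ ≤ (1 - a * c) * ‖y‖ + a * g := by rw [h0]; gcongr
    _ ≤ (1 - a * c) * max r (g / c) + a * (c * max r (g / c)) := by
        gcongr
        linarith
    _ = max r (g / c) := by ring

lemma exists_mapsTo_closedBall_dgdStep_of_eq_one (hm : m = 1) (hWsymm : W.IsSymm)
    (hWnonneg : ∀ i j, 0 ≤ W i j) (hWrow : ∀ i, ∑ j, W i j = 1)
    (hdiff : ∀ k, Differentiable ℝ (f k)) (hL : 0 < L)
    (hsmooth : ∀ k, ∀ x y, ‖gradient (f k) x - gradient (f k) y‖ ≤ L * ‖x - y‖)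
    (hlam : ∀ u : EuclideanSpace ℝ (Fin m × Fin n),
      lam * ‖u‖ ^ 2 ≤ ∑ k : Fin m, ∑ j : Fin m, W k j * ∑ i : Fin n, u (k, i) * u (j, i))
    (hlam1 : lam ≤ 1) (hα₀ : 0 < α₀) (hμ : 0 < μ) (hsc : StrongConvexWith μ (DGDG m n W f α₀)) :
    ∃ z, ∀ R a, 0 < a → a ≤ α₀ → a * L ≤ 1 + lam →
      MapsTo (dgdStep m n W f a) (Metric.closedBall z R) (Metric.closedBall z R) := by
  obtain ⟨z, hz⟩ := exists_forall_dgdStep_eq_self hm hWsymm hWnonneg hWrow hdiff hsmooth hlam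
    hα₀ hμ hsc
  refine ⟨z, fun R a ha haα₀ haL y hy => ?_⟩
  have hm' : (m : ℝ) = 1 := by exact_mod_cast hm
  have h := norm_dgdStep_sub_le hWsymm hWnonneg hWrow hdiff hsmooth hlam hα₀ hsc ha.le haα₀
    (σ := 0) (by positivity) (by rw [hm', div_one]; nlinarith) (by rw [hm', div_one]; linarith)
    y z
  rw [Metric.mem_closedBall, dist_eq_norm] at hy ⊢
  rw [sub_zero, one_mul, hz a] at h
  exact h.trans hy

lemma exists_closedBall_mem_mapsTo_dgdStep (hm : 1 ≤ m) (hWsymm : W.IsSymm)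
    (hWnonneg : ∀ i j, 0 ≤ W i j) (hWrow : ∀ i, ∑ j, W i j = 1)
    (hdiff : ∀ k, Differentiable ℝ (f k)) (hL : 0 < L)
    (hsmooth : ∀ k, ∀ x y, ‖gradient (f k) x - gradient (f k) y‖ ≤ L * ‖x - y‖)
    (hlam : ∀ u : EuclideanSpace ℝ (Fin m × Fin n),
      lam * ‖u‖ ^ 2 ≤ ∑ k : Fin m, ∑ j : Fin m, W k j * ∑ i : Fin n, u (k, i) * u (j, i))
    (hlam1 : lam ≤ 1) (hα₀ : 0 < α₀) (hμ : 0 < μ) (hsc : StrongConvexWith μ (DGDG m n W f α₀))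
    (x₀ : EuclideanSpace ℝ (Fin m × Fin n)) :
    ∃ z R, x₀ ∈ Metric.closedBall z R ∧ ∀ a, 0 < a → a ≤ α₀ → a * L ≤ 1 + lam →
      MapsTo (dgdStep m n W f a) (Metric.closedBall z R) (Metric.closedBall z R) := by
  rcases hm.eq_or_lt with hm1 | hm2
  · obtain ⟨z, hz⟩ := exists_mapsTo_closedBall_dgdStep_of_eq_one hm1.symm hWsymm hWnonneg hWrow
      hdiff hL hsmooth hlam hlam1 hα₀ hμ hsc
    exact ⟨z, dist x₀ z, Metric.mem_closedBall.2 le_rfl, hz _⟩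
  · obtain ⟨R, hR, hmaps⟩ := exists_mapsTo_closedBall_dgdStep_of_two_le hm2 hWsymm hWnonneg
      hWrow hdiff hL hsmooth hlam hlam1 hα₀ hμ hsc ‖x₀‖
    exact ⟨0, R, by simpa using hR, hmaps⟩

end DGD

theorem dgd_uniformly_bounded_general {m n : ℕ} (hm : 1 ≤ m) (hn : 1 ≤ n)
    (W : Matrix (Fin m) (Fin m) ℝ)
    (hWsymm : W.IsSymm)
    (hWnonneg : ∀ i j, 0 ≤ W i j)
    (hWrow : ∀ i, ∑ j, W i j = 1)
    (f : Fin m → EuclideanSpace ℝ (Fin n) → ℝ)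
    (hdiff : ∀ k, Differentiable ℝ (f k))
    (L : ℝ) (hL : 0 < L)
    (hsmooth : ∀ k, ∀ x y, ‖gradient (f k) x - gradient (f k) y‖ ≤ L * ‖x - y‖)
    (lam : ℝ)
    (hlam : ∀ u : EuclideanSpace ℝ (Fin m × Fin n),
      lam * ‖u‖ ^ 2 ≤ ∑ k : Fin m, ∑ j : Fin m, W k j * ∑ i : Fin n, u (k, i) * u (j, i))
    (α₀ : ℝ) (hα₀ : 0 < α₀)
    (hGsc : ∃ μ > 0, StrongConvexWith μ (DGDG m n W f α₀))
    (α : ℕ → ℝ) (hαpos : ∀ t, 0 < α t) (hαmono : ∀ t, α (t + 1) ≤ α t)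
    (hα0 : α 0 ≤ min ((1 + lam) / L) α₀)
    (x : ℕ → EuclideanSpace ℝ (Fin m × Fin n))
    (hiter : ∀ t, x (t + 1) = x t - gradient (DGDG m n W f (α t)) (x t)) :
    ∃ R > 0, ∀ t, ‖x t‖ ≤ R := by
  obtain ⟨μ, hμ, hsc⟩ := hGsc
  have hlam1 := le_one_of_forall_le_sum_mixing hm hn hWsymm hWnonneg hWrow hlam
  obtain ⟨z, R, hx0, hR⟩ := exists_closedBall_mem_mapsTo_dgdStep hm hWsymm hWnonneg hWrow hdiff
    hL hsmooth hlam hlam1 hα₀ hμ hsc (x 0)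
  have hαle : ∀ t, α t ≤ α 0 := fun t => antitone_nat_of_succ_le hαmono (Nat.zero_le t)
  have hmem : ∀ t, x t ∈ Metric.closedBall z R := by
    intro t
    induction t with
    | zero => exact hx0
    | succ t ih =>
      rw [hiter, (hasGradientAt_DGDG hWsymm hWnonneg hWrow hdiff hsmooth hlam (hαpos t).le
        (x t)).gradient]
      refine hR (α t) (hαpos t) ((hαle t).trans (hα0.trans (min_le_right _ _))) ?_ ih
      exact (le_div_iff₀ hL).1 ((hαle t).trans (hα0.trans (min_le_left _ _)))
  obtain ⟨C, hC⟩ := (Metric.isBounded_closedBall (x := z) (r := R)).exists_norm_le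
  exact ⟨max C 1, by positivity, fun t => (hC _ (hmem t)).trans (le_max_left _ _)⟩

/-- **main theorem.** If each `f_k` is `L`-smooth and nonnegative, `G_{α₀}` is
strongly convex for some `α₀ > 0`, and the positive non-increasing stepsizes satisfy
`α(0) ≤ min{(1 + λ_m(W))/L, α₀}`, then the DGD iterates `𝐱(t+1) = 𝐱(t) − ∇G_{α(t)}(𝐱(t))`
are uniformly bounded. -/
theorem dgd_uniformly_bounded {m n : ℕ} (hm : 1 ≤ m) (hn : 1 ≤ n)
    (W : Matrix (Fin m) (Fin m) ℝ)
    (hWsymm : W.IsSymm)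
    (hWnonneg : ∀ i j, 0 ≤ W i j)
    (hWrow : ∀ i, ∑ j, W i j = 1)
    (hWdiag : ∀ i, 0 < W i i)
    (f : Fin m → EuclideanSpace ℝ (Fin n) → ℝ)
    (hdiff : ∀ k, Differentiable ℝ (f k))
    (L : ℝ) (hL : 0 < L)
    (hsmooth : ∀ k, ∀ x y, ‖gradient (f k) x - gradient (f k) y‖ ≤ L * ‖x - y‖)
    (hfnonneg : ∀ k x, 0 ≤ f k x)
    (lam : ℝ) (hlam_gt : -1 < lam)
    (hlam : ∀ u : EuclideanSpace ℝ (Fin m × Fin n),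
      lam * ‖u‖ ^ 2 ≤ ∑ k : Fin m, ∑ j : Fin m, W k j * ∑ i : Fin n, u (k, i) * u (j, i))
    (α₀ : ℝ) (hα₀ : 0 < α₀)
    (hGsc : ∃ μ > 0, StrongConvexWith μ (DGDG m n W f α₀))
    (α : ℕ → ℝ) (hαpos : ∀ t, 0 < α t) (hαmono : ∀ t, α (t + 1) ≤ α t)
    (hα0 : α 0 ≤ min ((1 + lam) / L) α₀)
    (x : ℕ → EuclideanSpace ℝ (Fin m × Fin n))
    (hiter : ∀ t, x (t + 1) = x t - gradient (DGDG m n W f (α t)) (x t)) :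
    ∃ R > 0, ∀ t, ‖x t‖ ≤ R :=
  dgd_uniformly_bounded_general hm hn W hWsymm hWnonneg hWrow f hdiff L hL hsmooth lam hlam α₀ hα₀
    hGsc α hαpos hαmono hα0 x hiter
end
end

section
/- Assume G_{α₀} is μ-strongly convex for some α₀ > 0 and μ > 0. Let C₁ > 0 be a constant such that ‖∇F(𝐱_*^β + s(𝐱_*^α − 𝐱_*^β))‖ ≤ C₁ for all s ∈ [0,1] and all α, β ∈ (0, α₀]. Then for all α, β ∈ (0, α₀], the minimizers satisfy ‖𝐱_*^α − 𝐱_*^β‖ ≤ (2α₀ C₁ |β − α|)/(μ β). -/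
open Finset Set
open scoped RealInnerProductSpace

noncomputable section

/-!
Mixing `G_{α₀}` with the convex penalty shows that `G_β = (β/α₀) G_{α₀} + (1 - β/α₀) 𝐱ᵀ(I − W)𝐱/2`
is `μβ/α₀`-strongly convex, so it grows quadratically away from its minimizer `𝐱_*^β`.
Since `G_β = G_α + (β − α) F` and `𝐱_*^α` minimizes `G_α`, the excess `G_β(𝐱_*^α) − G_β(𝐱_*^β)` is
at most `|β − α| |F(𝐱_*^α) − F(𝐱_*^β)| ≤ |β − α| C₁ ‖𝐱_*^α − 𝐱_*^β‖` by the mean value theorem.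
Comparing the two bounds gives the estimate.
-/

open Filter Topology

lemma ConvexOn.sum {E ι : Type*} [AddCommGroup E] [Module ℝ E] {s : Set E} (hs : Convex ℝ s)
    (t : Finset ι) {g : ι → E → ℝ} (h : ∀ i ∈ t, ConvexOn ℝ s (g i)) :
    ConvexOn ℝ s fun x => ∑ i ∈ t, g i x := by
  classical
  induction t using Finset.induction_on with
  | empty => simpa using convexOn_const 0 hs
  | insert i t hi ih =>
    simp only [sum_insert hi]
    exact (h i (mem_insert_self i t)).add (ih fun j hj => h j (mem_insert_of_mem hj))

lemma le_of_forall_mem_Ioo_mul_le {a b : ℝ} (h : ∀ t ∈ Ioo (0 : ℝ) 1, t * a ≤ b) : a ≤ b := by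
  have hlim : Tendsto (fun t : ℝ => t * a) (𝓝[<] 1) (𝓝 a) := by
    simpa only [one_mul] using ((continuous_mul_const a).tendsto 1).mono_left nhdsWithin_le_nhds
  exact le_of_tendsto hlim (eventually_of_mem (Ioo_mem_nhdsLT zero_lt_one) h)

lemma StrongConvexOn.mul_sq_norm_sub_le_sub_of_isMinOn {E : Type*} [NormedAddCommGroup E]
    [NormedSpace ℝ E] {s : Set E} {c : ℝ} {f : E → ℝ} {x y : E} (hf : StrongConvexOn s c f)
    (hmin : IsMinOn f s x) (hx : x ∈ s) (hy : y ∈ s) :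
    c / 2 * ‖x - y‖ ^ 2 ≤ f y - f x := by
  refine le_of_forall_mem_Ioo_mul_le fun t ⟨ht₀, ht₁⟩ => ?_
  have hconv := hf.2 hx hy ht₀.le (sub_pos.2 ht₁).le (add_sub_cancel t 1)
  have hle := isMinOn_iff.1 hmin _ (hf.1 hx hy ht₀.le (sub_pos.2 ht₁).le (add_sub_cancel t 1))
  simp only [smul_eq_mul] at hconv
  have : (1 - t) * (t * (c / 2 * ‖x - y‖ ^ 2)) ≤ (1 - t) * (f y - f x) := by linarith
  exact le_of_mul_le_mul_left this (sub_pos.2 ht₁)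

lemma StrongConvexWith.mul_add_of_le {E : Type*} [NormedAddCommGroup E] [InnerProductSpace ℝ E]
    {F Q : E → ℝ} {μ α₀ β : ℝ} (hG : StrongConvexWith μ fun x => α₀ * F x + Q x)
    (hQ : ConvexOn ℝ univ Q) (hα₀ : 0 < α₀) (hβ : 0 ≤ β) (hβα₀ : β ≤ α₀) :
    StrongConvexWith (μ * β / α₀) fun x => β * F x + Q x := by
  have hsplit : (fun x => β * F x + Q x - μ * β / α₀ / 2 * ‖x‖ ^ 2) =
      fun x => (β / α₀) • (α₀ * F x + Q x - μ / 2 * ‖x‖ ^ 2) + (1 - β / α₀) • Q x := by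
    funext x
    simp only [smul_eq_mul]
    field_simp
    ring
  unfold StrongConvexWith
  rw [hsplit]
  exact (hG.smul (by positivity)).add (hQ.smul (sub_nonneg.2 ((div_le_one hα₀).2 hβα₀)))

lemma norm_sub_le_of_isMinOn_mul_add {E : Type*} [NormedAddCommGroup E] [NormedSpace ℝ E]
    {F Q : E → ℝ} {α β c L : ℝ} {xα xβ : E} (hc : 0 < c) (hL : 0 ≤ L)
    (hsc : StrongConvexOn univ c fun x => β * F x + Q x)
    (hxα : IsMinOn (fun x => α * F x + Q x) univ xα)
    (hxβ : IsMinOn (fun x => β * F x + Q x) univ xβ)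
    (hF : |F xα - F xβ| ≤ L * ‖xα - xβ‖) :
    ‖xα - xβ‖ ≤ 2 * L * |β - α| / c := by
  set d := ‖xα - xβ‖
  have hgrowth : c / 2 * d ^ 2 ≤ (β * F xα + Q xα) - (β * F xβ + Q xβ) := by
    simpa only [d, norm_sub_rev] using
      hsc.mul_sq_norm_sub_le_sub_of_isMinOn hxβ (mem_univ _) (mem_univ xα)
  have hgap : (β * F xα + Q xα) - (β * F xβ + Q xβ) ≤ |β - α| * (L * d) := by
    have hα : α * F xα + Q xα ≤ α * F xβ + Q xβ := hxα (mem_univ xβ)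
    calc (β * F xα + Q xα) - (β * F xβ + Q xβ)
        = (β - α) * (F xα - F xβ) + ((α * F xα + Q xα) - (α * F xβ + Q xβ)) := by ring
      _ ≤ |β - α| * |F xα - F xβ| + 0 := by
          rw [← abs_mul]
          exact add_le_add (le_abs_self _) (sub_nonpos.2 hα)
      _ ≤ |β - α| * (L * d) := by
          rw [add_zero]
          exact mul_le_mul_of_nonneg_left hF (abs_nonneg _)
  rw [le_div_iff₀ hc]
  have hd₀ : 0 ≤ d := norm_nonneg _
  rcases hd₀.eq_or_lt with hd | hd
  · rw [← hd, zero_mul]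
    positivity
  · nlinarith

lemma abs_sub_le_of_norm_gradient_le {E : Type*} [NormedAddCommGroup E] [InnerProductSpace ℝ E]
    [CompleteSpace E] {f : E → ℝ} {x y : E} {C : ℝ} (hf : Differentiable ℝ f)
    (hC : ∀ s ∈ Icc (0 : ℝ) 1, ‖gradient f (y + s • (x - y))‖ ≤ C) :
    |f x - f y| ≤ C * ‖x - y‖ := by
  rw [← Real.norm_eq_abs]
  refine (convex_segment y x).norm_image_sub_le_of_norm_fderiv_le (fun z _ => hf z) ?_
    (left_mem_segment ℝ y x) (right_mem_segment ℝ y x)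
  rw [segment_eq_image']
  rintro _ ⟨s, hs, rfl⟩
  simpa [gradient] using hC s hs

lemma differentiable_stackedF {m n : ℕ} {f : Fin m → EuclideanSpace ℝ (Fin n) → ℝ}
    (hf : ∀ k, Differentiable ℝ (f k)) : Differentiable ℝ (stackedF m n f) :=
  (Differentiable.fun_sum fun k _ => (hf k).comp
    ((differentiable_piLp 2).mpr fun i => (EuclideanSpace.proj (𝕜 := ℝ) (k, i)).differentiable))
    |>.const_mul _

lemma stackedQuad_eq_sum_sq {m n : ℕ} {W : Matrix (Fin m) (Fin m) ℝ}
    (hrow : ∀ k, ∑ j, W k j = 1) (hcol : ∀ j, ∑ k, W k j = 1)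
    (x : EuclideanSpace ℝ (Fin m × Fin n)) :
    stackedQuad m n W x = 1 / 4 * ∑ k, ∑ j, W k j * ∑ i, (x (k, i) - x (j, i)) ^ 2 := by
  set a : Fin m → ℝ := fun k => ∑ i, x (k, i) ^ 2
  have hnorm : ‖x‖ ^ 2 = ∑ k, a k := by
    simp [EuclideanSpace.norm_sq_eq, Fintype.sum_prod_type, a]
  have hrows : ∑ k, ∑ j, W k j * a k = ∑ k, a k :=
    sum_congr rfl fun k _ => by rw [← sum_mul, hrow, one_mul]
  have hcols : ∑ k, ∑ j, W k j * a j = ∑ j, a j := by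
    rw [sum_comm]
    exact sum_congr rfl fun j _ => by rw [← sum_mul, hcol, one_mul]
  have hexpand : ∑ k, ∑ j, W k j * ∑ i, (x (k, i) - x (j, i)) ^ 2 =
      ∑ k, ∑ j, W k j * a k + ∑ k, ∑ j, W k j * a j
        - 2 * ∑ k, ∑ j, W k j * ∑ i, x (k, i) * x (j, i) := by
    simp only [a, mul_sum, ← sum_add_distrib, ← sum_sub_distrib]
    exact sum_congr rfl fun k _ => sum_congr rfl fun j _ => sum_congr rfl fun i _ => by ring
  rw [stackedQuad, hnorm, hexpand, hrows, hcols]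
  ring

lemma convexOn_stackedQuad {m n : ℕ} {W : Matrix (Fin m) (Fin m) ℝ} (hW : ∀ k j, 0 ≤ W k j)
    (hrow : ∀ k, ∑ j, W k j = 1) (hcol : ∀ j, ∑ k, W k j = 1) :
    ConvexOn ℝ univ (stackedQuad m n W) := by
  have hsq (k j : Fin m) (i : Fin n) :
      ConvexOn ℝ univ fun x : EuclideanSpace ℝ (Fin m × Fin n) => (x (k, i) - x (j, i)) ^ 2 :=
    ((Even.convexOn_pow (𝕜 := ℝ) even_two).comp_linearMap
      (EuclideanSpace.proj (k, i) - EuclideanSpace.proj (j, i) :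
        EuclideanSpace ℝ (Fin m × Fin n) →L[ℝ] ℝ).toLinearMap :)
  rw [funext (stackedQuad_eq_sum_sq hrow hcol)]
  refine ConvexOn.smul (by norm_num) <| ConvexOn.sum convex_univ _ fun k _ =>
    ConvexOn.sum convex_univ _ fun j _ => ?_
  exact (ConvexOn.sum convex_univ _ fun i _ => hsq k j i).smul (hW k j)

theorem dgd_minimizers_lipschitz_general {m n : ℕ}
    (W : Matrix (Fin m) (Fin m) ℝ)
    (hWsymm : W.IsSymm)
    (hWnonneg : ∀ i j, 0 ≤ W i j)
    (hWrow : ∀ i, ∑ j, W i j = 1)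
    (f : Fin m → EuclideanSpace ℝ (Fin n) → ℝ)
    (hdiff : ∀ k, Differentiable ℝ (f k))
    (μ α₀ : ℝ) (hμ : 0 < μ) (hα₀ : 0 < α₀)
    (hGsc : StrongConvexWith μ (DGDG m n W f α₀))
    (xstar : ℝ → EuclideanSpace ℝ (Fin m × Fin n))
    (hmin : ∀ α ∈ Set.Ioc (0 : ℝ) α₀, ∀ y, DGDG m n W f α (xstar α) ≤ DGDG m n W f α y)
    (C₁ : ℝ) (hC₁pos : 0 < C₁)
    (hC₁ : ∀ s ∈ Set.Icc (0 : ℝ) 1, ∀ α ∈ Set.Ioc (0 : ℝ) α₀, ∀ β ∈ Set.Ioc (0 : ℝ) α₀,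
      ‖gradient (stackedF m n f) (xstar β + s • (xstar α - xstar β))‖ ≤ C₁) :
    ∀ α ∈ Set.Ioc (0 : ℝ) α₀, ∀ β ∈ Set.Ioc (0 : ℝ) α₀,
      ‖xstar α - xstar β‖ ≤ 2 * α₀ * C₁ * |β - α| / (μ * β) := by
  intro α hα β hβ
  have hcol (j : Fin m) : ∑ k, W k j = 1 :=
    (sum_congr rfl fun k _ => hWsymm.apply j k).trans (hWrow j)
  have hβsc : StrongConvexWith (μ * β / α₀) (DGDG m n W f β) :=
    hGsc.mul_add_of_le (convexOn_stackedQuad hWnonneg hWrow hcol) hα₀ hβ.1.le hβ.2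
  have hF := abs_sub_le_of_norm_gradient_le (differentiable_stackedF hdiff)
    fun s hs => hC₁ s hs α hα β hβ
  calc ‖xstar α - xstar β‖ ≤ 2 * C₁ * |β - α| / (μ * β / α₀) :=
        norm_sub_le_of_isMinOn_mul_add (div_pos (mul_pos hμ hβ.1) hα₀) hC₁pos.le
          (strongConvexOn_iff_convex.mpr hβsc) (isMinOn_univ_iff.mpr (hmin α hα))
          (isMinOn_univ_iff.mpr (hmin β hβ)) hF
    _ = 2 * α₀ * C₁ * |β - α| / (μ * β) := by field_simp

/-- If `G_{α₀}` is `μ`-strongly convex and `C₁` bounds `‖∇F‖` along all segments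
between minimizers, then `‖𝐱_*^α − 𝐱_*^β‖ ≤ 2α₀C₁|β − α|/(μβ)` for all `α, β ∈ (0, α₀]`. -/
theorem dgd_minimizers_lipschitz {m n : ℕ} (hm : 1 ≤ m) (hn : 1 ≤ n)
    (W : Matrix (Fin m) (Fin m) ℝ)
    (hWsymm : W.IsSymm)
    (hWnonneg : ∀ i j, 0 ≤ W i j)
    (hWrow : ∀ i, ∑ j, W i j = 1)
    (hWdiag : ∀ i, 0 < W i i)
    (f : Fin m → EuclideanSpace ℝ (Fin n) → ℝ)
    (hdiff : ∀ k, Differentiable ℝ (f k))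
    (μ α₀ : ℝ) (hμ : 0 < μ) (hα₀ : 0 < α₀)
    (hGsc : StrongConvexWith μ (DGDG m n W f α₀))
    (xstar : ℝ → EuclideanSpace ℝ (Fin m × Fin n))
    (hmin : ∀ α ∈ Set.Ioc (0 : ℝ) α₀, ∀ y, DGDG m n W f α (xstar α) ≤ DGDG m n W f α y)
    (C₁ : ℝ) (hC₁pos : 0 < C₁)
    (hC₁ : ∀ s ∈ Set.Icc (0 : ℝ) 1, ∀ α ∈ Set.Ioc (0 : ℝ) α₀, ∀ β ∈ Set.Ioc (0 : ℝ) α₀,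
      ‖gradient (stackedF m n f) (xstar β + s • (xstar α - xstar β))‖ ≤ C₁) :
    ∀ α ∈ Set.Ioc (0 : ℝ) α₀, ∀ β ∈ Set.Ioc (0 : ℝ) α₀,
      ‖xstar α - xstar β‖ ≤ 2 * α₀ * C₁ * |β - α| / (μ * β) :=
  dgd_minimizers_lipschitz_general W hWsymm hWnonneg hWrow f hdiff μ α₀ hμ hα₀ hGsc xstar hmin C₁
    hC₁pos hC₁
end
end

section
/- Assume each local cost is a quadratic form f_k(x) = (1/2) xᵀ A_k x with A_k an n×n symmetric positive semidefinite matrix (so each f_k is convex), and assume the aggregate cost f(x) = (1/2m) xᵀ(Σ_{k=1}^m A_k) x is μ-strongly convex for some μ > 0. Then for every α > 0 the function G_α is strongly convex (i.e., there exists c(α) > 0 with G_α(𝐱) ≥ c(α)‖𝐱‖² for all 𝐱 ∈ ℝ^{nm}). -/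
open Finset Set
open scoped RealInnerProductSpace

noncomputable section

/-!
`G_α` is continuous and quadratic (`G_α(t𝐱) = t² G_α(𝐱)`), so it suffices that it is positive
off the origin: `c` is then its minimum on the unit sphere. Write `𝐱 = 𝟏 ⊗ x̄ + 𝐮` with `x̄` the
average of the blocks. Since `W` is symmetric and stochastic, the penalty equals
`¼ ∑ W_kj ‖x_k − x_j‖²`, so it only sees `𝐮` and is at least `(1 − β)/2 ‖𝐮‖²`; the local costs
are nonnegative. Hence `G_α(𝐱) ≤ 0` forces `𝐮 = 0`, and then `G_α(𝐱) = α f(x̄) ≥ αμ/2 ‖x̄‖²`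
forces `x̄ = 0`.
-/

theorem exists_pos_mul_norm_sq_le_of_continuous {E : Type*} [NormedAddCommGroup E]
    [NormedSpace ℝ E] [FiniteDimensional ℝ E] {g : E → ℝ} (hg : Continuous g)
    (hsmul : ∀ (t : ℝ) x, g (t • x) = t ^ 2 * g x) (hpos : ∀ x, x ≠ 0 → 0 < g x) :
    ∃ c > 0, ∀ x, c * ‖x‖ ^ 2 ≤ g x := by
  have hg0 : g 0 = 0 := by simpa using hsmul 0 0
  have hsphere : ∀ x, x ≠ 0 → ‖x‖⁻¹ • x ∈ Metric.sphere (0 : E) 1 := fun x hx => by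
    simp [norm_smul, hx]
  have hscale : ∀ x : E, g x = ‖x‖ ^ 2 * g (‖x‖⁻¹ • x) := fun x => by
    rcases eq_or_ne x 0 with rfl | hx
    · simp [hg0]
    · rw [← hsmul, smul_smul, mul_inv_cancel₀ (norm_ne_zero_iff.mpr hx), one_smul]
  rcases (Metric.sphere (0 : E) 1).eq_empty_or_nonempty with hempty | hne
  · refine ⟨1, one_pos, fun x => ?_⟩
    obtain rfl : x = 0 := by
      by_contra hx
      simpa [hempty] using hsphere x hx
    simp [hg0]
  · obtain ⟨x₀, hx₀, hmin⟩ := (isCompact_sphere (0 : E) 1).exists_isMinOn hne hg.continuousOn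
    have hx₀ne : x₀ ≠ 0 := Metric.ne_of_mem_sphere hx₀ one_ne_zero
    refine ⟨g x₀, hpos x₀ hx₀ne, fun x => ?_⟩
    rcases eq_or_ne x 0 with rfl | hx
    · simp [hg0]
    · rw [hscale x, mul_comm]
      exact mul_le_mul_of_nonneg_left (hmin (hsphere x hx)) (sq_nonneg _)

theorem StrongConvexWith.mul_norm_sq_le {E : Type*} [NormedAddCommGroup E]
    [InnerProductSpace ℝ E] {μ : ℝ} {g : E → ℝ} (hg : StrongConvexWith μ g) (hg0 : g 0 = 0)
    (hneg : ∀ v, g (-v) = g v) (v : E) : μ / 2 * ‖v‖ ^ 2 ≤ g v := by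
  have := hg.2 (mem_univ v) (mem_univ (-v)) (by norm_num : (0 : ℝ) ≤ 1 / 2)
    (by norm_num : (0 : ℝ) ≤ 1 / 2) (by norm_num)
  simp only [smul_neg, add_neg_cancel, hg0, norm_zero, hneg, norm_neg, smul_eq_mul] at this
  linarith

def halfQuadForm {n : ℕ} (A : Matrix (Fin n) (Fin n) ℝ) (x : EuclideanSpace ℝ (Fin n)) : ℝ :=
  (1 / 2) * ∑ i, ∑ j, A i j * x i * x j

section HalfQuadForm

variable {n : ℕ}

theorem continuous_halfQuadForm (A : Matrix (Fin n) (Fin n) ℝ) :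
    Continuous (halfQuadForm A) := by
  unfold halfQuadForm; fun_prop

theorem halfQuadForm_smul (A : Matrix (Fin n) (Fin n) ℝ) (t : ℝ) (x : EuclideanSpace ℝ (Fin n)) :
    halfQuadForm A (t • x) = t ^ 2 * halfQuadForm A x := by
  simp only [halfQuadForm, PiLp.smul_apply, smul_eq_mul, Finset.mul_sum]
  refine Finset.sum_congr rfl fun i _ => Finset.sum_congr rfl fun j _ => ?_
  ring

theorem halfQuadForm_nonneg {A : Matrix (Fin n) (Fin n) ℝ} (hA : A.PosSemidef)
    (x : EuclideanSpace ℝ (Fin n)) :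
    0 ≤ halfQuadForm A x := by
  have h := hA.dotProduct_mulVec_nonneg x.ofLp
  simp only [dotProduct, Matrix.mulVec, Finset.mul_sum, Pi.star_apply, star_trivial] at h
  unfold halfQuadForm
  refine mul_nonneg (by norm_num) (h.trans_eq (Finset.sum_congr rfl fun i _ =>
    Finset.sum_congr rfl fun j _ => ?_))
  ring

end HalfQuadForm

theorem EuclideanSpace.norm_sq_eq_sum_prod {ι κ : Type*} [Fintype ι] [Fintype κ]
    (x : EuclideanSpace ℝ (ι × κ)) :
    ‖x‖ ^ 2 = ∑ k, ∑ i, x (k, i) ^ 2 := by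
  simp only [EuclideanSpace.norm_sq_eq, Real.norm_eq_abs, sq_abs, Fintype.sum_prod_type]

section Stacked

variable {m n : ℕ}

theorem stackedQuad_eq_sum_sq_sub {W : Matrix (Fin m) (Fin m) ℝ} (hWsymm : W.IsSymm)
    (hWrow : ∀ i, ∑ j, W i j = 1) (x : EuclideanSpace ℝ (Fin m × Fin n)) :
    stackedQuad m n W x = 1 / 4 * ∑ k, ∑ j, W k j * ∑ i, (x (k, i) - x (j, i)) ^ 2 := by
  have hrow : ∀ a : Fin m → ℝ, ∑ k, ∑ j, W k j * a k = ∑ k, a k := fun a => by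
    simp only [← Finset.sum_mul, hWrow, one_mul]
  have hcol : ∀ a : Fin m → ℝ, ∑ k, ∑ j, W k j * a j = ∑ j, a j := fun a => by
    rw [Finset.sum_comm]
    simp only [← Finset.sum_mul, hWsymm.apply, hWrow, one_mul]
  have hexpand : ∑ k, ∑ j, W k j * ∑ i, (x (k, i) - x (j, i)) ^ 2 =
      ∑ k, ∑ j, W k j * (∑ i, x (k, i) ^ 2) + ∑ k, ∑ j, W k j * (∑ i, x (j, i) ^ 2)
        - 2 * ∑ k, ∑ j, W k j * ∑ i, x (k, i) * x (j, i) := by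
    simp only [Finset.mul_sum, ← Finset.sum_add_distrib, ← Finset.sum_sub_distrib]
    refine Finset.sum_congr rfl fun k _ => Finset.sum_congr rfl fun j _ =>
      Finset.sum_congr rfl fun i _ => ?_
    ring
  rw [hexpand, hrow, hcol, stackedQuad, EuclideanSpace.norm_sq_eq_sum_prod]
  ring

theorem stackedQuad_sub_const {W : Matrix (Fin m) (Fin m) ℝ} (hWsymm : W.IsSymm)
    (hWrow : ∀ i, ∑ j, W i j = 1) (x : EuclideanSpace ℝ (Fin m × Fin n)) (v : Fin n → ℝ) :
    stackedQuad m n W (WithLp.toLp 2 fun p => x p - v p.2) = stackedQuad m n W x := by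
  simp only [stackedQuad_eq_sum_sq_sub hWsymm hWrow, sub_sub_sub_cancel_right]

theorem continuous_stackedQuad (W : Matrix (Fin m) (Fin m) ℝ) :
    Continuous (stackedQuad m n W) := by
  unfold stackedQuad; fun_prop

theorem stackedQuad_smul (W : Matrix (Fin m) (Fin m) ℝ) (t : ℝ)
    (x : EuclideanSpace ℝ (Fin m × Fin n)) :
    stackedQuad m n W (t • x) = t ^ 2 * stackedQuad m n W x := by
  have hcross : ∑ k, ∑ j, W k j * ∑ i, (t • x) (k, i) * (t • x) (j, i) =
      t ^ 2 * ∑ k, ∑ j, W k j * ∑ i, x (k, i) * x (j, i) := by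
    simp only [PiLp.smul_apply, smul_eq_mul, Finset.mul_sum]
    refine Finset.sum_congr rfl fun k _ => Finset.sum_congr rfl fun j _ =>
      Finset.sum_congr rfl fun i _ => ?_
    ring
  rw [stackedQuad, stackedQuad, hcross, norm_smul, mul_pow, Real.norm_eq_abs, sq_abs]
  ring

variable {f : Fin m → EuclideanSpace ℝ (Fin n) → ℝ}

theorem continuous_stackedF (hf : ∀ k, Continuous (f k)) : Continuous (stackedF m n f) := by
  unfold stackedF
  fun_prop

theorem stackedF_smul (hf : ∀ k (t : ℝ) v, f k (t • v) = t ^ 2 * f k v) (t : ℝ)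
    (x : EuclideanSpace ℝ (Fin m × Fin n)) : stackedF m n f (t • x) = t ^ 2 * stackedF m n f x := by
  have hblock : ∀ k, WithLp.toLp 2 (fun i => (t • x) (k, i)) =
      t • WithLp.toLp 2 (fun i => x (k, i)) := fun k => rfl
  simp only [stackedF, hblock, hf, ← Finset.mul_sum]
  ring

end Stacked

theorem DGDG_pos {m n : ℕ} (hm : m ≠ 0) {W : Matrix (Fin m) (Fin m) ℝ} (hWsymm : W.IsSymm)
    (hWrow : ∀ i, ∑ j, W i j = 1) {β : ℝ} (hβlt : β < 1)
    (hβ : ∀ u : EuclideanSpace ℝ (Fin m × Fin n),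
      (∀ i : Fin n, ∑ k : Fin m, u (k, i) = 0) →
      (1 - β) * ‖u‖ ^ 2 ≤ 2 * stackedQuad m n W u)
    {f : Fin m → EuclideanSpace ℝ (Fin n) → ℝ} (hf : ∀ k v, 0 ≤ f k v) {μ : ℝ} (hμ : 0 < μ)
    (hagg : ∀ v, μ / 2 * ‖v‖ ^ 2 ≤ (1 / (m : ℝ)) * ∑ k, f k v) {α : ℝ} (hα : 0 < α)
    {x : EuclideanSpace ℝ (Fin m × Fin n)} (hx : x ≠ 0) : 0 < DGDG m n W f α x := by
  set xbar : EuclideanSpace ℝ (Fin n) := WithLp.toLp 2 fun i => (∑ k, x (k, i)) / m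
  set u : EuclideanSpace ℝ (Fin m × Fin n) := WithLp.toLp 2 fun p => x p - xbar p.2
  have hu_sum : ∀ i, ∑ k, u (k, i) = 0 := fun i => by
    have : (m : ℝ) ≠ 0 := Nat.cast_ne_zero.mpr hm
    simp only [u, xbar, Finset.sum_sub_distrib, Finset.sum_const, Finset.card_univ,
      Fintype.card_fin, nsmul_eq_mul]
    rw [mul_div_cancel₀ _ this, sub_self]
  have hQ : (1 - β) / 2 * ‖u‖ ^ 2 ≤ stackedQuad m n W x := by
    rw [← stackedQuad_sub_const hWsymm hWrow x xbar]
    linarith [hβ u hu_sum]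
  have hQ0 : 0 ≤ stackedQuad m n W x :=
    le_trans (mul_nonneg (by linarith) (sq_nonneg _)) hQ
  have hF : 0 ≤ stackedF m n f x :=
    mul_nonneg (by positivity) (Finset.sum_nonneg fun k _ => hf _ _)
  by_contra! hG
  unfold DGDG at hG
  have hu : u = 0 := by
    have : (1 - β) / 2 * ‖u‖ ^ 2 ≤ 0 := by nlinarith [mul_nonneg hα.le hF]
    have : ‖u‖ ^ 2 ≤ 0 := nonpos_of_mul_nonpos_right this (by linarith)
    simpa using this
  have hblock : ∀ k, WithLp.toLp 2 (fun i => x (k, i)) = xbar := fun k => by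
    ext i
    simpa [u, sub_eq_zero] using congrArg (· (k, i)) hu
  have hxbar : xbar = 0 := by
    have h := hagg xbar
    simp only [stackedF, hblock] at hF hG
    have : α * (μ / 2 * ‖xbar‖ ^ 2) ≤ 0 := by linarith [mul_le_mul_of_nonneg_left h hα.le]
    have : μ / 2 * ‖xbar‖ ^ 2 ≤ 0 := nonpos_of_mul_nonpos_right this hα
    have : ‖xbar‖ ^ 2 ≤ 0 := nonpos_of_mul_nonpos_right this (by linarith)
    simpa using this
  apply hx
  ext p
  simpa [u, hxbar, sub_eq_zero] using congrArg (· p) hu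

theorem Galpha_strongly_convex_of_convex_quadratics_general {m n : ℕ} (hm : 1 ≤ m)
    (W : Matrix (Fin m) (Fin m) ℝ)
    (hWsymm : W.IsSymm)
    (hWrow : ∀ i, ∑ j, W i j = 1)
    (β : ℝ) (hβlt : β < 1)
    (hβ : ∀ u : EuclideanSpace ℝ (Fin m × Fin n),
      (∀ i : Fin n, ∑ k : Fin m, u (k, i) = 0) →
      (1 - β) * ‖u‖ ^ 2 ≤ 2 * stackedQuad m n W u)
    (A : Fin m → Matrix (Fin n) (Fin n) ℝ)
    (hApsd : ∀ k, (A k).PosSemidef)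
    (f : Fin m → EuclideanSpace ℝ (Fin n) → ℝ)
    (hf : ∀ k, ∀ x : EuclideanSpace ℝ (Fin n),
      f k x = (1 / 2) * ∑ i : Fin n, ∑ j : Fin n, A k i j * x i * x j)
    (μ : ℝ) (hμ : 0 < μ)
    (hfsc : StrongConvexWith μ (fun x : EuclideanSpace ℝ (Fin n) =>
      (1 / (m : ℝ)) * ∑ k : Fin m, f k x)) :
    ∀ α : ℝ, 0 < α →
      ∃ c > 0, ∀ x : EuclideanSpace ℝ (Fin m × Fin n), c * ‖x‖ ^ 2 ≤ DGDG m n W f α x := by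
  obtain rfl : f = fun k => halfQuadForm (A k) := funext fun k => funext (hf k)
  have hsmul : ∀ k (t : ℝ) v, halfQuadForm (A k) (t • v) = t ^ 2 * halfQuadForm (A k) v :=
    fun k => halfQuadForm_smul (A k)
  have hagg := hfsc.mul_norm_sq_le (by simp [halfQuadForm])
    fun v => by simp only [← neg_one_smul ℝ v, hsmul, neg_one_sq, one_mul]
  intro α hα
  refine exists_pos_mul_norm_sq_le_of_continuous ?_ (fun t x => ?_) fun x hx =>
    DGDG_pos (by omega) hWsymm hWrow hβlt hβ (fun k => halfQuadForm_nonneg (hApsd k)) hμ hagg hα hx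
  · exact (continuous_const.mul (continuous_stackedF fun k => continuous_halfQuadForm _)).add
      (continuous_stackedQuad W)
  · simp only [DGDG, stackedF_smul hsmul, stackedQuad_smul]
    ring

/-- If each `f_k(x) = (1/2)xᵀA_k x` with `A_k` symmetric positive semidefinite
and the aggregate cost `f` is `μ`-strongly convex, then for every `α > 0` the function `G_α` is
strongly convex: there is `c(α) > 0` with `G_α(𝐱) ≥ c(α)‖𝐱‖²` for all `𝐱`. -/
theorem Galpha_strongly_convex_of_convex_quadratics {m n : ℕ} (hm : 1 ≤ m) (hn : 1 ≤ n)
    (W : Matrix (Fin m) (Fin m) ℝ)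
    (hWsymm : W.IsSymm)
    (hWnonneg : ∀ i j, 0 ≤ W i j)
    (hWrow : ∀ i, ∑ j, W i j = 1)
    (hWdiag : ∀ i, 0 < W i i)
    (β : ℝ) (hβlt : β < 1)
    (hβ : ∀ u : EuclideanSpace ℝ (Fin m × Fin n),
      (∀ i : Fin n, ∑ k : Fin m, u (k, i) = 0) →
      (1 - β) * ‖u‖ ^ 2 ≤ 2 * stackedQuad m n W u)
    (A : Fin m → Matrix (Fin n) (Fin n) ℝ)
    (hAsymm : ∀ k, (A k).IsSymm)
    (hApsd : ∀ k, (A k).PosSemidef)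
    (f : Fin m → EuclideanSpace ℝ (Fin n) → ℝ)
    (hf : ∀ k, ∀ x : EuclideanSpace ℝ (Fin n),
      f k x = (1 / 2) * ∑ i : Fin n, ∑ j : Fin n, A k i j * x i * x j)
    (μ : ℝ) (hμ : 0 < μ)
    (hfsc : StrongConvexWith μ (fun x : EuclideanSpace ℝ (Fin n) =>
      (1 / (m : ℝ)) * ∑ k : Fin m, f k x)) :
    ∀ α : ℝ, 0 < α →
      ∃ c > 0, ∀ x : EuclideanSpace ℝ (Fin m × Fin n), c * ‖x‖ ^ 2 ≤ DGDG m n W f α x :=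
  Galpha_strongly_convex_of_convex_quadratics_general hm W hWsymm hWrow β hβlt hβ A hApsd f hf μ hμ
    hfsc
end
end

section
/- Assume each local cost is a quadratic form f_k(x) = (1/2) xᵀ A_k x with A_k an n×n symmetric matrix (not necessarily positive semidefinite), and assume the aggregate cost f(x) = (1/2m) xᵀ(Σ_{k=1}^m A_k) x is μ-strongly convex for some μ > 0. Then there exists α₀ > 0 such that for every α ∈ (0, α₀] the function G_α is strongly convex. -/
/-!
Write `𝐱 = 𝐮 + 𝟏 ⊗ v`, where `v` is the mean of the blocks of `𝐱` and the blocks of `𝐮` sum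
to zero. Since `W` is doubly stochastic, the penalty does not see the consensus part `𝟏 ⊗ v`,
and by the spectral gap it is at least `(1 - β)/2 ‖𝐮‖²`; strong convexity of `f` gives
`F(𝟏 ⊗ v) ≥ μ/2 ‖v‖²`. The remaining terms of `F(𝐱)` are `O(‖𝐮‖ ‖v‖ + ‖𝐮‖²)`, so for small
`α` they are absorbed by AM-GM, leaving `G_α(𝐱) ≥ c/2 ‖𝐱‖²` with `c` of order `α μ / m`.
As `G_α - c/2 ‖·‖²` is a quadratic form, its nonnegativity is its convexity.
-/

open Finset Set
open scoped RealInnerProductSpace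

noncomputable section

theorem QuadraticMap.convexOn_univ {E : Type*} [AddCommGroup E] [Module ℝ E]
    (Q : QuadraticMap ℝ E ℝ) (hQ : ∀ x, 0 ≤ Q x) : ConvexOn ℝ univ Q := by
  refine ⟨convex_univ, fun x _ y _ a b ha hb hab => ?_⟩
  obtain rfl : b = 1 - a := by linarith
  -- `a Q x + (1 - a) Q y - Q (a x + (1 - a) y) = a (1 - a) Q (x - y)`
  have hx : Q x = Q y + Q (x - y) + QuadraticMap.polar Q y (x - y) := by
    rw [← QuadraticMap.map_add (⇑Q), add_sub_cancel]
  have hxy : Q (a • x + (1 - a) • y) =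
      Q y + a * a * Q (x - y) + a * QuadraticMap.polar Q y (x - y) := by
    rw [show a • x + (1 - a) • y = y + a • (x - y) by module, QuadraticMap.map_add (⇑Q),
      QuadraticMap.map_smul, QuadraticMap.polar_smul_right, smul_eq_mul, smul_eq_mul]
  simp only [smul_eq_mul, hx, hxy]
  nlinarith [mul_nonneg (mul_nonneg ha hb) (hQ (x - y))]

theorem ConvexOn.nonneg_of_map_smul {E : Type*} [AddCommGroup E] [Module ℝ E] {h : E → ℝ}
    (hconv : ConvexOn ℝ univ h) (hsmul : ∀ (t : ℝ) x, h (t • x) = t ^ 2 * h x) (x : E) :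
    0 ≤ h x := by
  have hmid := hconv.2 (mem_univ x) (mem_univ 0) (by norm_num : (0 : ℝ) ≤ 1 / 2)
    (by norm_num : (0 : ℝ) ≤ 1 / 2) (by norm_num)
  have h0 : h 0 = 0 := by simpa using hsmul 0 0
  rw [smul_zero, add_zero, hsmul, h0, smul_eq_mul, smul_eq_mul] at hmid
  linarith

theorem StrongConvexWith.le_of_map_smul {E : Type*} [NormedAddCommGroup E] [InnerProductSpace ℝ E]
    {μ : ℝ} {g : E → ℝ} (hg : StrongConvexWith μ g) (hsmul : ∀ (t : ℝ) x, g (t • x) = t ^ 2 * g x)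
    (x : E) : μ / 2 * ‖x‖ ^ 2 ≤ g x := by
  have := hg.nonneg_of_map_smul (fun t x => by
    rw [hsmul, norm_smul, mul_pow, Real.norm_eq_abs, sq_abs]; ring) x
  linarith

theorem mul_add_mul_add_ge_of_abs_le {c a a' b b' r s : ℝ} (ha : |a| ≤ r) (ha' : |a'| ≤ r)
    (hb : |b| ≤ s) (hb' : |b'| ≤ s) :
    c * b * b' - |c| * (2 * r * s + r ^ 2) ≤ c * (a + b) * (a' + b') := by
  have hcross : |a * b' + b * a' + a * a'| ≤ 2 * r * s + r ^ 2 := by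
    have := abs_add_three (a * b') (b * a') (a * a')
    simp only [abs_mul] at this
    have hr : 0 ≤ r := (abs_nonneg a).trans ha
    have hs : 0 ≤ s := (abs_nonneg b).trans hb
    nlinarith [mul_le_mul ha hb' (abs_nonneg _) hr, mul_le_mul hb ha' (abs_nonneg _) hs,
      mul_le_mul ha ha' (abs_nonneg _) hr]
  have := neg_abs_le (c * (a * b' + b * a' + a * a'))
  rw [abs_mul] at this
  nlinarith [mul_le_mul_of_nonneg_left hcross (abs_nonneg c)]

theorem sum_mul_add_mul_add_ge_of_abs_le {ι : Type*} [Fintype ι] (A : Matrix ι ι ℝ)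
    {y z : ι → ℝ} {r s : ℝ} (hy : ∀ i, |y i| ≤ r) (hz : ∀ i, |z i| ≤ s) :
    ∑ i, ∑ j, A i j * z i * z j - (∑ i, ∑ j, |A i j|) * (2 * r * s + r ^ 2) ≤
      ∑ i, ∑ j, A i j * (y i + z i) * (y j + z j) := by
  simp only [Finset.sum_mul, ← Finset.sum_sub_distrib]
  gcongr with i _ j _
  exact mul_add_mul_add_ge_of_abs_le (hy i) (hy j) (hz i) (hz j)

def coordMul {ι : Type*} [Fintype ι] (p r : ι) : QuadraticMap ℝ (EuclideanSpace ℝ ι) ℝ :=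
  QuadraticMap.linMulLin (PiLp.projₗ 2 (fun _ => ℝ) p) (PiLp.projₗ 2 (fun _ => ℝ) r)

@[simp] theorem coordMul_apply {ι : Type*} [Fintype ι] (p r : ι) (x : EuclideanSpace ℝ ι) :
    coordMul p r x = x p * x r := rfl

section Stacked

variable {m n : ℕ}

theorem exists_quadraticMap_eq_DGDG_sub (W : Matrix (Fin m) (Fin m) ℝ)
    (A : Fin m → Matrix (Fin n) (Fin n) ℝ) (f : Fin m → EuclideanSpace ℝ (Fin n) → ℝ)
    (hf : ∀ k x, f k x = (1 / 2) * ∑ i : Fin n, ∑ j : Fin n, A k i j * x i * x j) (α c : ℝ) :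
    ∃ Q : QuadraticMap ℝ (EuclideanSpace ℝ (Fin m × Fin n)) ℝ,
      ∀ x, Q x = DGDG m n W f α x - c / 2 * ‖x‖ ^ 2 := by
  let normSq : QuadraticMap ℝ (EuclideanSpace ℝ (Fin m × Fin n)) ℝ := ∑ p, coordMul p p
  refine ⟨α • (1 / m : ℝ) • ∑ k, (1 / 2 : ℝ) • ∑ i, ∑ j, A k i j • coordMul (k, i) (k, j)
    + (1 / 2 : ℝ) • (normSq - ∑ k, ∑ j, W k j • ∑ i, coordMul (k, i) (j, i))
    - (c / 2) • normSq, fun x => ?_⟩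
  simp only [DGDG, stackedF, stackedQuad, EuclideanSpace.real_norm_sq_eq]
  simp only [hf, normSq, sub_apply, add_apply, smul_apply, _root_.sum_apply, coordMul_apply,
    smul_eq_mul, Finset.mul_sum, mul_assoc, sq]

def consensus (m : ℕ) (v : EuclideanSpace ℝ (Fin n)) : EuclideanSpace ℝ (Fin m × Fin n) :=
  WithLp.toLp 2 fun p => v p.2

def blockMean (x : EuclideanSpace ℝ (Fin m × Fin n)) : EuclideanSpace ℝ (Fin n) :=
  WithLp.toLp 2 fun i => (∑ k, x (k, i)) / m

theorem sum_sub_consensus_blockMean (hm : m ≠ 0) (x : EuclideanSpace ℝ (Fin m × Fin n))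
    (i : Fin n) :
    ∑ k, (x - consensus m (blockMean x)) (k, i) = 0 := by
  have hm' : (m : ℝ) ≠ 0 := by exact_mod_cast hm
  simp [consensus, blockMean, Finset.sum_sub_distrib, mul_div_cancel₀, hm']

theorem norm_sq_add_consensus {u : EuclideanSpace ℝ (Fin m × Fin n)}
    (hu : ∀ i, ∑ k, u (k, i) = 0) (v : EuclideanSpace ℝ (Fin n)) :
    ‖u + consensus m v‖ ^ 2 = ‖u‖ ^ 2 + m * ‖v‖ ^ 2 := by
  have hcross : ∑ k, ∑ i, u (k, i) * v i = 0 := by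
    rw [Finset.sum_comm]
    simp [← Finset.sum_mul, hu]
  simp only [EuclideanSpace.real_norm_sq_eq, Fintype.sum_prod_type, consensus, PiLp.add_apply,
    add_sq, Finset.sum_add_distrib, mul_assoc, ← Finset.mul_sum, hcross]
  simp

theorem stackedQuad_add_consensus {W : Matrix (Fin m) (Fin m) ℝ} (hrow : ∀ k, ∑ j, W k j = 1)
    (hcol : ∀ j, ∑ k, W k j = 1) (u : EuclideanSpace ℝ (Fin m × Fin n))
    (v : EuclideanSpace ℝ (Fin n)) :
    stackedQuad m n W (u + consensus m v) = stackedQuad m n W u := by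
  have hr : ∀ c : Fin m → ℝ, ∑ k, ∑ j, W k j * c k = ∑ k, c k := fun c => by
    simp [← Finset.sum_mul, hrow]
  have hc : ∀ c : Fin m → ℝ, ∑ k, ∑ j, W k j * c j = ∑ j, c j := fun c => by
    rw [Finset.sum_comm]; simp [← Finset.sum_mul, hcol]
  simp only [stackedQuad, EuclideanSpace.real_norm_sq_eq, Fintype.sum_prod_type, consensus,
    PiLp.add_apply, add_sq, add_mul, mul_add, Finset.sum_add_distrib, hr, hc]
  simp only [mul_comm (v _), mul_assoc, ← Finset.mul_sum, Finset.sum_const, Finset.card_univ,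
    Fintype.card_fin, nsmul_eq_mul, sq]
  ring

theorem stackedF_add_consensus_ge (A : Fin m → Matrix (Fin n) (Fin n) ℝ)
    {f : Fin m → EuclideanSpace ℝ (Fin n) → ℝ}
    (hf : ∀ k x, f k x = (1 / 2) * ∑ i : Fin n, ∑ j : Fin n, A k i j * x i * x j)
    (u : EuclideanSpace ℝ (Fin m × Fin n)) (v : EuclideanSpace ℝ (Fin n)) :
    (1 / m) * ∑ k, f k v - (∑ k, ∑ i, ∑ j, |A k i j|) / (2 * m) * (2 * ‖u‖ * ‖v‖ + ‖u‖ ^ 2) ≤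
      stackedF m n f (u + consensus m v) := by
  have hu : ∀ k i, |u (k, i)| ≤ ‖u‖ := fun k i => by simpa using PiLp.norm_apply_le u (k, i)
  have hv : ∀ i, |v i| ≤ ‖v‖ := fun i => by simpa using PiLp.norm_apply_le v i
  calc (1 / m) * ∑ k, f k v - (∑ k, ∑ i, ∑ j, |A k i j|) / (2 * m) * (2 * ‖u‖ * ‖v‖ + ‖u‖ ^ 2)
      = (1 / m) * ∑ k, (1 / 2) * (∑ i, ∑ j, A k i j * v i * v j
          - (∑ i, ∑ j, |A k i j|) * (2 * ‖u‖ * ‖v‖ + ‖u‖ ^ 2)) := by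
        simp only [hf, ← Finset.mul_sum, Finset.sum_sub_distrib, ← Finset.sum_mul]
        ring
    _ ≤ (1 / m) * ∑ k, (1 / 2) * ∑ i, ∑ j, A k i j * (u (k, i) + v i) * (u (k, j) + v j) := by
        gcongr with k
        exact sum_mul_add_mul_add_ge_of_abs_le (A k) (hu k) hv
    _ = stackedF m n f (u + consensus m v) := by
        simp [stackedF, hf, consensus]

theorem DGDG_sub_nonneg (hm : m ≠ 0) {W : Matrix (Fin m) (Fin m) ℝ}
    (hrow : ∀ k, ∑ j, W k j = 1) (hcol : ∀ j, ∑ k, W k j = 1) {β : ℝ}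
    (hβ : ∀ u : EuclideanSpace ℝ (Fin m × Fin n), (∀ i : Fin n, ∑ k : Fin m, u (k, i) = 0) →
      (1 - β) * ‖u‖ ^ 2 ≤ 2 * stackedQuad m n W u)
    (A : Fin m → Matrix (Fin n) (Fin n) ℝ) {f : Fin m → EuclideanSpace ℝ (Fin n) → ℝ}
    (hf : ∀ k x, f k x = (1 / 2) * ∑ i : Fin n, ∑ j : Fin n, A k i j * x i * x j)
    {μ : ℝ} (hμ : 0 < μ) (hagg : ∀ v, μ / 2 * ‖v‖ ^ 2 ≤ (1 / m) * ∑ k, f k v)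
    {ℓ : ℝ} (hℓ : (∑ k, ∑ i, ∑ j, |A k i j|) / m ≤ ℓ) {α : ℝ} (hα : 0 ≤ α)
    (hαβ : α * (ℓ ^ 2 / μ + ℓ / 2 + μ / (4 * m)) ≤ (1 - β) / 2)
    (x : EuclideanSpace ℝ (Fin m × Fin n)) :
    0 ≤ DGDG m n W f α x - α * μ / (2 * m) / 2 * ‖x‖ ^ 2 := by
  have hm' : (0 : ℝ) < m := by positivity
  obtain ⟨u, v, hu, rfl⟩ : ∃ u v, (∀ i, ∑ k, u (k, i) = 0) ∧ x = u + consensus m v :=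
    ⟨_, blockMean x, sum_sub_consensus_blockMean hm x, (sub_add_cancel _ _).symm⟩
  rw [DGDG, stackedQuad_add_consensus hrow hcol, norm_sq_add_consensus hu]
  set a := ‖u‖
  set b := ‖v‖
  have ha : 0 ≤ a := norm_nonneg u
  have hb : 0 ≤ b := norm_nonneg v
  have hF : μ / 2 * b ^ 2 - ℓ / 2 * (2 * a * b + a ^ 2) ≤ stackedF m n f (u + consensus m v) := by
    have hL : (∑ k, ∑ i, ∑ j, |A k i j|) / (2 * m) ≤ ℓ / 2 := by
      rw [mul_comm, ← div_div]; linarith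
    have := mul_le_mul_of_nonneg_right hL (by positivity : 0 ≤ 2 * a * b + a ^ 2)
    linarith [hagg v, stackedF_add_consensus_ge A hf u v]
  have hQ : (1 - β) * a ^ 2 ≤ 2 * stackedQuad m n W u := hβ u hu
  have hamgm : ℓ * a * b ≤ μ / 4 * b ^ 2 + ℓ ^ 2 / μ * a ^ 2 := by
    have h : 0 ≤ (μ * b / 2 - ℓ * a) ^ 2 / μ := by positivity
    have h' : (μ * b / 2 - ℓ * a) ^ 2 / μ = μ / 4 * b ^ 2 + ℓ ^ 2 / μ * a ^ 2 - ℓ * a * b := by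
      field_simp; ring
    linarith
  have hc : α * μ / (2 * m) / 2 * (a ^ 2 + m * b ^ 2) =
      α * μ / (4 * m) * a ^ 2 + α * μ / 4 * b ^ 2 := by
    field_simp; ring
  rw [hc]
  linear_combination (1 / 2) * hQ + mul_le_mul_of_nonneg_left hF hα +
    mul_le_mul_of_nonneg_left hamgm hα + mul_le_mul_of_nonneg_right hαβ (sq_nonneg a)

end Stacked

theorem Galpha_strongly_convex_of_quadratics_small_stepsize_general {m n : ℕ} (hm : 1 ≤ m)
    (W : Matrix (Fin m) (Fin m) ℝ)
    (hWsymm : W.IsSymm)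
    (hWrow : ∀ i, ∑ j, W i j = 1)
    (β : ℝ) (hβlt : β < 1)
    (hβ : ∀ u : EuclideanSpace ℝ (Fin m × Fin n),
      (∀ i : Fin n, ∑ k : Fin m, u (k, i) = 0) →
      (1 - β) * ‖u‖ ^ 2 ≤ 2 * stackedQuad m n W u)
    (A : Fin m → Matrix (Fin n) (Fin n) ℝ)
    (f : Fin m → EuclideanSpace ℝ (Fin n) → ℝ)
    (hf : ∀ k, ∀ x : EuclideanSpace ℝ (Fin n),
      f k x = (1 / 2) * ∑ i : Fin n, ∑ j : Fin n, A k i j * x i * x j)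
    (μ : ℝ) (hμ : 0 < μ)
    (hfsc : StrongConvexWith μ (fun x : EuclideanSpace ℝ (Fin n) =>
      (1 / (m : ℝ)) * ∑ k : Fin m, f k x)) :
    ∃ α₀ > 0, ∀ α : ℝ, 0 < α → α ≤ α₀ →
      ∃ c > 0, StrongConvexWith c (DGDG m n W f α) := by
  have hm0 : m ≠ 0 := by omega
  have hcol : ∀ j, ∑ k, W k j = 1 := fun j =>
    (Finset.sum_congr rfl fun k _ => hWsymm.apply j k).trans (hWrow j)
  have hf_smul : ∀ k (t : ℝ) x, f k (t • x) = t ^ 2 * f k x := fun k t x => by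
    simp only [hf, PiLp.smul_apply, smul_eq_mul, Finset.mul_sum]
    exact Finset.sum_congr rfl fun i _ => Finset.sum_congr rfl fun j _ => by ring
  have hagg := hfsc.le_of_map_smul fun t x => by
    simp only [hf_smul, ← Finset.mul_sum]
    ring
  obtain ⟨ℓ, hℓ, hℓ0⟩ : ∃ ℓ, (∑ k, ∑ i, ∑ j, |A k i j|) / m ≤ ℓ ∧ 0 ≤ ℓ :=
    ⟨_, le_rfl, by positivity⟩
  have hK : 0 < ℓ ^ 2 / μ + ℓ / 2 + μ / (4 * m) := by positivity
  refine ⟨(1 - β) / 2 / (ℓ ^ 2 / μ + ℓ / 2 + μ / (4 * m)), div_pos (by linarith) hK,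
    fun α hα hαα₀ => ⟨α * μ / (2 * m), by positivity, ?_⟩⟩
  obtain ⟨Q, hQ⟩ := exists_quadraticMap_eq_DGDG_sub W A f hf α (α * μ / (2 * m))
  have hQ_nonneg : ∀ x, 0 ≤ Q x := fun x => (hQ x).symm ▸
    DGDG_sub_nonneg hm0 hWrow hcol hβ A hf hμ hagg hℓ hα.le ((le_div_iff₀ hK).mp hαα₀) x
  exact (Q.convexOn_univ hQ_nonneg).congr fun x _ => hQ x

/-- If each `f_k(x) = (1/2)xᵀA_k x` with `A_k` symmetric (not necessarily
positive semidefinite) and the aggregate cost `f` is `μ`-strongly convex, then there exists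
`α₀ > 0` such that `G_α` is strongly convex for every `α ∈ (0, α₀]`. -/
theorem Galpha_strongly_convex_of_quadratics_small_stepsize {m n : ℕ} (hm : 1 ≤ m) (hn : 1 ≤ n)
    (W : Matrix (Fin m) (Fin m) ℝ)
    (hWsymm : W.IsSymm)
    (hWnonneg : ∀ i j, 0 ≤ W i j)
    (hWrow : ∀ i, ∑ j, W i j = 1)
    (hWdiag : ∀ i, 0 < W i i)
    (β : ℝ) (hβlt : β < 1)
    (hβ : ∀ u : EuclideanSpace ℝ (Fin m × Fin n),
      (∀ i : Fin n, ∑ k : Fin m, u (k, i) = 0) →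
      (1 - β) * ‖u‖ ^ 2 ≤ 2 * stackedQuad m n W u)
    (A : Fin m → Matrix (Fin n) (Fin n) ℝ)
    (hAsymm : ∀ k, (A k).IsSymm)
    (f : Fin m → EuclideanSpace ℝ (Fin n) → ℝ)
    (hf : ∀ k, ∀ x : EuclideanSpace ℝ (Fin n),
      f k x = (1 / 2) * ∑ i : Fin n, ∑ j : Fin n, A k i j * x i * x j)
    (μ : ℝ) (hμ : 0 < μ)
    (hfsc : StrongConvexWith μ (fun x : EuclideanSpace ℝ (Fin n) =>
      (1 / (m : ℝ)) * ∑ k : Fin m, f k x)) :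
    ∃ α₀ > 0, ∀ α : ℝ, 0 < α → α ≤ α₀ →
      ∃ c > 0, StrongConvexWith c (DGDG m n W f α) :=
  Galpha_strongly_convex_of_quadratics_small_stepsize_general hm W hWsymm hWrow β hβlt hβ A f hf μ
    hμ hfsc
end
end
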